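/- arXiv:1407.4727 — 11 statements merged into one kernel-verified Lean document; each statement's English description precedes it below -/
import Mathlib

section
/- Let L be a first-order language and let M be an infinite L-structure that has property A. Then there is no injective continuous group homomorphism from S_∞ into the automorphism group Aut(M) of M. -/
open FirstOrder

/-- The topology of pointwise convergence on the permutation group of a set `V`
(regarded as a discrete space): the topology induced from the product topology
on `V → V` where `V` carries the discrete topology. -/
instance permPointwiseTopology (V : Type*) : TopologicalSpace (Equiv.Perm V) :=
  TopologicalSpace.induced (fun g : Equiv.Perm V => (g : V → V))
    (@Pi.topologicalSpace V (fun _ => V) (fun _ => ⊥))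

/-- The automorphism group of an `L`-structure `M`, realized as the subgroup of
`Equiv.Perm M` consisting of the permutations preserving all function and relation symbols. -/
def firstOrderAut (L : FirstOrder.Language) (M : Type*) [L.Structure M] :
    Subgroup (Equiv.Perm M) where
  carrier := {g : Equiv.Perm M |
    (∀ (n : ℕ) (f : L.Functions n) (x : Fin n → M),
        g (Language.Structure.funMap f x) = Language.Structure.funMap f (⇑g ∘ x)) ∧
    (∀ (n : ℕ) (r : L.Relations n) (x : Fin n → M),
        Language.Structure.RelMap r (⇑g ∘ x) ↔ Language.Structure.RelMap r x)}
  one_mem' := ⟨fun _ _ _ => rfl, fun _ _ _ => Iff.rfl⟩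
  mul_mem' := by
    rintro a b ⟨haf, har⟩ ⟨hbf, hbr⟩
    refine ⟨fun n f x => ?_, fun n r x => ?_⟩
    · show a (b (Language.Structure.funMap f x)) = _
      rw [hbf, haf]
      rfl
    · show Language.Structure.RelMap r (⇑a ∘ (⇑b ∘ x)) ↔ _
      rw [har, hbr]
  inv_mem' := by
    rintro a ⟨haf, har⟩
    refine ⟨fun n f x => ?_, fun n r x => ?_⟩
    · apply a.injective
      rw [Equiv.Perm.coe_inv, Equiv.apply_symm_apply, haf]
      congr 1
      funext i
      simp
    · have h := har n r (⇑a⁻¹ ∘ x)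
      have hx : ⇑a ∘ (⇑a⁻¹ ∘ x) = x := by
        funext i
        simp
      rw [hx] at h
      exact h.symm

/-- Property A: for every pair of disjoint countably infinite subsets `X₁, X₂` of `M`
there are a set `I` of binary relation symbols of `L` and an element `x ∈ M` such that
every `y ∈ X₁` satisfies `R (x, y)` for some `R ∈ I`, while no `y ∈ X₂` satisfies
`R (x, y)` for any `R ∈ I`. -/
def PropertyA (L : FirstOrder.Language) (M : Type*) [L.Structure M] : Prop :=
  ∀ X₁ X₂ : Set M, Disjoint X₁ X₂ → X₁.Countable → X₁.Infinite →
    X₂.Countable → X₂.Infinite →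
    ∃ (I : Set (L.Relations 2)) (x : M),
      (∀ y ∈ X₁, ∃ R ∈ I, Language.Structure.RelMap R ![x, y]) ∧
      (∀ y ∈ X₂, ∀ R ∈ I, ¬ Language.Structure.RelMap R ![x, y])

/-!
An injective homomorphism `φ : S_∞ →* Perm M` keeps the order `p` of an element of prime
order, and every point moved by a permutation of order `p` has an orbit of exactly `p` points.
Taking such elements inside the pointwise stabiliser of `{0, …, n-1}` with `p > 2 |P|`, one finds
for every finite `P ⊆ M` points `a ≠ b` outside `P` with `b = φ g a` for some `g` fixing
`{0, …, n-1}`. Recursively this gives sequences `aₙ`, `bₙ` with disjoint infinite ranges, and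
property A yields `x` and relations `R_i` separating them. By continuity the stabiliser of `x`
contains `φ g` for every `g` fixing some `{0, …, n-1}`; for the corresponding `n` the
automorphism `φ g` fixes `x` and sends `aₙ` to `bₙ`, so it cannot preserve `R_i(x, aₙ)`.
-/

open Equiv Finset Function

namespace Equiv.Perm

variable {α : Type*}

theorem exists_apply_notMem_of_minimalPeriod (h : Perm α) (P : Finset α) {x : α}
    (h1 : 1 < minimalPeriod h x) (hP : 2 * #P < minimalPeriod h x) :
    ∃ m ∉ P, h m ∉ P ∧ h m ≠ m := by
  classical
  by_contra! hcon
  -- the orbit of `x` has `minimalPeriod h x` points, all moved, hence all in `P ∪ h⁻¹ P`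
  have horbit : ∀ k, (⇑h)^[k] x ∈ P ∪ P.image ⇑h.symm := by
    intro k
    have hmoved : h ((⇑h)^[k] x) ≠ (⇑h)^[k] x := fun hfix => by
      have hx := minimalPeriod_apply_iterate (minimalPeriod_pos_iff_mem_periodicPts.mp
        (zero_lt_one.trans h1)) k
      rw [minimalPeriod_eq_one_iff_isFixedPt.mpr hfix] at hx
      omega
    by_cases hk : (⇑h)^[k] x ∈ P
    · exact mem_union_left _ hk
    · exact mem_union_right _ (mem_image.mpr ⟨_, by_contra fun h' => hmoved (hcon _ hk h'),
        h.symm_apply_apply _⟩)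
  refine hP.not_ge ?_
  calc minimalPeriod h x = #((range (minimalPeriod h x)).image fun k => (⇑h)^[k] x) := by
        rw [card_image_of_injOn (by simpa [Set.InjOn] using iterate_injOn_Iio_minimalPeriod),
          card_range]
    _ ≤ #(P ∪ P.image h.symm) := card_le_card (image_subset_iff.mpr fun k _ => horbit k)
    _ ≤ #P + #P := (card_union_le _ _).trans (Nat.add_le_add_left card_image_le _)
    _ = 2 * #P := (two_mul _).symm

theorem exists_apply_notMem_of_orderOf_prime (h : Perm α) (P : Finset α) {p : ℕ}
    [hp : Fact p.Prime] (hh : orderOf h = p) (hP : 2 * #P < p) :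
    ∃ m ∉ P, h m ∉ P ∧ h m ≠ m := by
  obtain ⟨x, hx⟩ : ∃ x, h x ≠ x := by
    by_contra! hfix
    exact hp.out.ne_one (by rw [← hh, show h = 1 from Equiv.ext hfix, orderOf_one])
  have hper : minimalPeriod h x = p := by
    refine minimalPeriod_eq_prime ?_ hx
    rw [IsPeriodicPt, IsFixedPt, iterate_eq_pow, ← hh, pow_orderOf_eq_one, one_apply]
  exact h.exists_apply_notMem_of_minimalPeriod P (hper ▸ hp.out.one_lt) (hper ▸ hP)

end Equiv.Perm

theorem exists_orderOf_eq_and_forall_mem_range_apply_eq (n p : ℕ) [hp : Fact p.Prime] :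
    ∃ g : Perm ℕ, orderOf g = p ∧ ∀ i ∈ range n, g i = i := by
  obtain ⟨σ, hσ⟩ := exists_prime_orderOf_dvd_card (G := Perm (Fin p)) p
    (by rw [Fintype.card_perm, Fintype.card_fin]; exact Nat.dvd_factorial hp.out.pos le_rfl)
  let ι : Fin p ↪ ℕ := ⟨fun i => n + i, fun i j hij => Fin.ext (by simpa using hij)⟩
  refine ⟨Perm.viaEmbeddingHom ι σ,
    by rw [orderOf_injective _ (Perm.viaEmbeddingHom_injective ι), hσ],
    fun i hi => Perm.viaEmbedding_apply_of_notMem _ _ _ ?_⟩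
  rintro ⟨j, rfl⟩
  exact not_lt.mpr (Nat.le_add_right n j) (mem_range.mp hi)

theorem exists_seq_injective_of_forall_finset {M : Type*} (Q : ℕ → M → M → Prop)
    (h : ∀ n (P : Finset M), ∃ a b, a ∉ P ∧ b ∉ P ∧ a ≠ b ∧ Q n a b) :
    ∃ a b : ℕ → M, Injective a ∧ Injective b ∧ Disjoint (Set.range a) (Set.range b) ∧
      ∀ n, Q n (a n) (b n) := by
  classical
  choose a b ha hb hab hQ using h
  -- `S n` collects the points chosen before stage `n`
  let S : ℕ → Finset M := fun n => Nat.rec ∅ (fun k S => {a k S, b k S} ∪ S) n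
  have hS : Monotone S := monotone_nat_of_le_succ fun n => subset_union_right
  have haS : ∀ {k n}, k < n → a k (S k) ∈ S n := fun hkn => hS hkn (by simp [S])
  have hbS : ∀ {k n}, k < n → b k (S k) ∈ S n := fun hkn => hS hkn (by simp [S])
  refine ⟨fun n => a n (S n), fun n => b n (S n),
    Injective.of_lt_imp_ne fun k n hkn h => ha n (S n) (h ▸ haS hkn),
    Injective.of_lt_imp_ne fun k n hkn h => hb n (S n) (h ▸ hbS hkn),
    Set.disjoint_range_iff.mpr fun k n => ?_, fun n => hQ n (S n)⟩
  rcases lt_trichotomy k n with hkn | rfl | hnk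
  · exact fun h => hb n (S n) (h ▸ haS hkn)
  · exact hab k (S k)
  · exact fun h => ha k (S k) (h ▸ hbS hnk)

theorem exists_pair_notMem_of_injective {M : Type*} (φ : Perm ℕ →* Perm M)
    (hφ : Injective φ) (n : ℕ) (P : Finset M) :
    ∃ a b, a ∉ P ∧ b ∉ P ∧ a ≠ b ∧
      ∃ g : Perm ℕ, (∀ i ∈ range n, g i = i) ∧ φ g a = b := by
  obtain ⟨p, hpP, hp⟩ := Nat.exists_infinite_primes (2 * #P + 1)
  have := Fact.mk hp
  obtain ⟨g, hg, hgn⟩ := exists_orderOf_eq_and_forall_mem_range_apply_eq n p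
  obtain ⟨m, hm, hgm, hmoved⟩ := (φ g).exists_apply_notMem_of_orderOf_prime P
    (by rw [orderOf_injective φ hφ, hg]) (by omega)
  exact ⟨m, φ g m, hm, hgm, hmoved.symm, g, hgn, rfl⟩

theorem isOpen_setOf_apply_eq (V : Type*) (x y : V) :
    IsOpen {g : Perm V | g x = y} := by
  let _ : TopologicalSpace V := ⊥
  have : DiscreteTopology V := ⟨rfl⟩
  exact ((isOpen_discrete {y}).preimage (continuous_apply (A := fun _ : V => V) x)).preimage
    continuous_induced_dom

theorem exists_finset_forall_apply_eq_imp_mem_of_isOpen {V : Type*} {U : Set (Perm V)}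
    (hU : IsOpen U) (h1 : 1 ∈ U) :
    ∃ F : Finset V, ∀ g : Perm V, (∀ i ∈ F, g i = i) → g ∈ U := by
  obtain ⟨t, ht, rfl⟩ := hU
  obtain ⟨F, u, hu, hsub⟩ := (@isOpen_pi_iff V (fun _ => V) (fun _ => ⊥) t).mp ht _ h1
  exact ⟨F, fun g hg => hsub fun i hi => by simpa [hg i hi] using (hu i hi).2⟩

theorem exists_finset_forall_apply_eq_of_continuous {V M : Type*} (φ : Perm V →* Perm M)
    (hφ : Continuous φ) (x : M) :
    ∃ F : Finset V, ∀ g : Perm V, (∀ i ∈ F, g i = i) → φ g x = x :=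
  exists_finset_forall_apply_eq_imp_mem_of_isOpen (U := φ ⁻¹' {h | h x = x})
    ((isOpen_setOf_apply_eq M x x).preimage hφ) (by simp)

theorem relMap_pair_apply_iff {L : Language} {M : Type*} [L.Structure M] {g : Perm M}
    (hg : g ∈ firstOrderAut L M) (R : L.Relations 2) (x y : M) :
    Language.Structure.RelMap R ![g x, g y] ↔ Language.Structure.RelMap R ![x, y] := by
  rw [← (hg.2 2 R ![x, y])]
  congr! 1
  ext i
  fin_cases i <;> rfl

theorem no_continuous_embedding_of_Sinfty_of_propertyA_general
    (L : FirstOrder.Language) (M : Type*) [L.Structure M]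
    (hA : PropertyA L M) :
    ¬ ∃ e : Equiv.Perm ℕ →* firstOrderAut L M,
        Function.Injective e ∧ Continuous e := by
  rintro ⟨e, he, hcont⟩
  let φ := (firstOrderAut L M).subtype.comp e
  obtain ⟨a, b, ha, hb, hab, hQ⟩ := exists_seq_injective_of_forall_finset _
    (exists_pair_notMem_of_injective φ (Subtype.val_injective.comp he))
  obtain ⟨I, x, hI₁, hI₂⟩ := hA _ _ hab (Set.countable_range a)
    (Set.infinite_range_of_injective ha) (Set.countable_range b)
    (Set.infinite_range_of_injective hb)
  obtain ⟨F, hF⟩ := exists_finset_forall_apply_eq_of_continuous φ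
    (continuous_subtype_val.comp hcont) x
  obtain ⟨n, hFn⟩ := exists_nat_subset_range F
  obtain ⟨g, hgn, hgab⟩ := hQ n
  obtain ⟨R, hRI, hR⟩ := hI₁ (a n) ⟨n, rfl⟩
  refine hI₂ (b n) ⟨n, rfl⟩ R hRI ?_
  rw [← hgab, ← hF g fun i hi => hgn i (hFn hi)]
  exact (relMap_pair_apply_iff (e g).2 R x (a n)).mpr hR

/-- If `M` is an infinite `L`-structure with property A, then there is no injective
continuous group homomorphism from `S_∞ = Equiv.Perm ℕ` (with the pointwise convergence
topology) into `Aut(M)` (with the pointwise convergence topology). -/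
theorem no_continuous_embedding_of_Sinfty_of_propertyA
    (L : FirstOrder.Language) (M : Type*) [L.Structure M] [Infinite M]
    (hA : PropertyA L M) :
    ¬ ∃ e : Equiv.Perm ℕ →* firstOrderAut L M,
        Function.Injective e ∧ Continuous e :=
  no_continuous_embedding_of_Sinfty_of_propertyA_general L M hA
end

section
/- Let G be a simple graph such that for every pair of disjoint countable sets X₁, X₂ of vertices of G there exists a vertex x adjacent to every vertex in X₁ and to no vertex in X₂. Then there is no injective continuous group homomorphism from S_∞ into the automorphism group Aut(G) of the graph G. -/
/-- The automorphism group of a binary relational structure `(V, r)`, realized as the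
subgroup of `Equiv.Perm V` of permutations preserving the relation `r` in both directions. -/
def relAut {V : Type*} (r : V → V → Prop) : Subgroup (Equiv.Perm V) where
  carrier := {g : Equiv.Perm V | ∀ x y : V, r (g x) (g y) ↔ r x y}
  one_mem' := fun _ _ => Iff.rfl
  mul_mem' := by
    intro a b ha hb x y
    exact (ha (b x) (b y)).trans (hb x y)
  inv_mem' := by
    intro a ha x y
    have h := (ha (a⁻¹ x) (a⁻¹ y)).symm
    simpa using h

/-- If `G` is a simple graph such that for every pair of disjoint countable sets of vertices
`X₁, X₂` there is a vertex adjacent to every vertex of `X₁` and to no vertex of `X₂`,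
then there is no injective continuous group homomorphism from `S_∞ = Equiv.Perm ℕ`
(with the pointwise convergence topology) into `Aut(G)` (with the pointwise convergence
topology). -/
theorem no_continuous_embedding_of_Sinfty_into_randomGraphAut
    {V : Type*} (G : SimpleGraph V)
    (hext : ∀ X₁ X₂ : Set V, Disjoint X₁ X₂ → X₁.Countable → X₂.Countable →
      ∃ x : V, (∀ y ∈ X₁, G.Adj x y) ∧ ∀ y ∈ X₂, ¬ G.Adj x y) :
    ¬ ∃ e : Equiv.Perm ℕ →* relAut G.Adj,
        Function.Injective e ∧ Continuous e := by
  classical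
  rintro ⟨e, hinj, hcont⟩
  letI : TopologicalSpace V := ⊥
  haveI : DiscreteTopology V := ⟨rfl⟩
  letI : TopologicalSpace ℕ := ⊥
  haveI : DiscreteTopology ℕ := ⟨rfl⟩
  -- Step 1: continuity at the identity
  have cont_fix : ∀ F : Finset V, ∃ k : ℕ, ∀ σ : Equiv.Perm ℕ,
      (∀ i, i ≤ k → σ i = i) → ∀ v ∈ F, ((e σ : Equiv.Perm V) v = v) := by
    intro F
    have hcoe : Continuous (fun h : (relAut G.Adj) => ((h : Equiv.Perm V) : V → V)) := by
      exact continuous_induced_dom.comp continuous_subtype_val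
    have hO : IsOpen {h : (relAut G.Adj) | ∀ v ∈ F, (h : Equiv.Perm V) v = v} := by
      have heq : {h : (relAut G.Adj) | ∀ v ∈ F, (h : Equiv.Perm V) v = v}
          = ⋂ v ∈ F, {h : (relAut G.Adj) | (h : Equiv.Perm V) v = v} := by
        ext h; simp
      rw [heq]
      refine isOpen_biInter_finset (fun v _ => ?_)
      have heq2 : {h : (relAut G.Adj) | (h : Equiv.Perm V) v = v}
          = (fun h : (relAut G.Adj) => ((h : Equiv.Perm V) : V → V) v) ⁻¹' {v} := rfl
      rw [heq2]
      exact ((continuous_apply v).comp hcoe).isOpen_preimage _ (isOpen_discrete _)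
    have hpre : IsOpen (e ⁻¹' {h : (relAut G.Adj) | ∀ v ∈ F, (h : Equiv.Perm V) v = v}) :=
      hO.preimage hcont
    rw [isOpen_induced_iff] at hpre
    obtain ⟨T, hTopen, hTpre⟩ := hpre
    have h1T : ((1 : Equiv.Perm ℕ) : ℕ → ℕ) ∈ T := by
      have : (1 : Equiv.Perm ℕ) ∈ e ⁻¹' {h : (relAut G.Adj) | ∀ v ∈ F, (h : Equiv.Perm V) v = v} := by
        simp only [Set.mem_preimage, map_one, Set.mem_setOf_eq]
        intro v _
        rfl
      rw [← hTpre] at this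
      exact this
    obtain ⟨I, u, hu, hsub⟩ := isOpen_pi_iff.mp hTopen _ h1T
    obtain ⟨k, hk⟩ : ∃ k : ℕ, ∀ i ∈ I, i ≤ k := ⟨I.sup id, fun i hi => Finset.le_sup (f := id) hi⟩
    refine ⟨k, fun σ hσ => ?_⟩
    have hσT : (σ : ℕ → ℕ) ∈ T := by
      apply hsub
      intro i hi
      have : σ i = i := hσ i (hk i hi)
      rw [this]
      exact (hu i hi).2
    have : σ ∈ e ⁻¹' {h : (relAut G.Adj) | ∀ v ∈ F, (h : Equiv.Perm V) v = v} := by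
      rw [← hTpre]; exact hσT
    exact this
  -- Step 2: the stage lemma
  have stage : ∀ (F : Finset V) (m : ℕ), ∃ p : ℕ × V × V,
      m ≤ p.1 ∧ p.2.1 ≠ p.2.2 ∧ p.2.1 ∉ F ∧ p.2.2 ∉ F ∧
      ((e (Equiv.swap (p.1+1) (p.1+2)) : Equiv.Perm V) p.2.1 = p.2.2) ∧
      ((e (Equiv.swap (p.1+1) (p.1+2)) : Equiv.Perm V) p.2.2 = p.2.1) := by
    intro F m
    obtain ⟨k1, hk1⟩ := cont_fix F
    set k := max m k1 with hkdef
    set τ := Equiv.swap (k+1) (k+2) with hτdef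
    have hτfix : ∀ i, i ≤ k1 → τ i = i := by
      intro i hi
      have h1 : i ≠ k + 1 := by omega
      have h2 : i ≠ k + 2 := by omega
      exact Equiv.swap_apply_of_ne_of_ne h1 h2
    have hτne : τ ≠ 1 := by
      intro h
      have := congrArg (fun f : Equiv.Perm ℕ => f (k+1)) h
      simp [hτdef, Equiv.swap_apply_left] at this
    have hne : e τ ≠ 1 := fun h => hτne (hinj (h.trans (map_one e).symm))
    have hmoved : ∃ v : V, (e τ : Equiv.Perm V) v ≠ v := by
      by_contra h
      push_neg at h
      apply hne
      apply Subtype.ext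
      apply Equiv.ext
      intro v
      simpa using h v
    obtain ⟨v, hv⟩ := hmoved
    have hsq : ∀ u : V, (e τ : Equiv.Perm V) ((e τ : Equiv.Perm V) u) = u := by
      intro u
      have hττ : τ * τ = 1 := Equiv.swap_mul_self _ _
      have h2 : e τ * e τ = 1 := by rw [← map_mul, hττ, map_one]
      have := congrArg (fun h : (relAut G.Adj) => (h : Equiv.Perm V) u) h2
      simpa using this
    have hfixF : ∀ w ∈ F, (e τ : Equiv.Perm V) w = w := fun w hw => hk1 τ hτfix w hw
    refine ⟨⟨k, v, (e τ : Equiv.Perm V) v⟩, le_max_left _ _, Ne.symm hv, ?_, ?_, rfl, hsq v⟩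
    · intro hvF
      exact hv (hfixF v hvF)
    · intro hwF
      have := hfixF _ hwF
      rw [hsq v] at this
      exact hv this.symm
  choose step hstep using stage
  -- Step 3: recursive construction of disjoint pairs
  let st : ℕ → Finset V := fun m =>
    Nat.rec ∅ (fun m F => insert (step F m).2.1 (insert (step F m).2.2 F)) m
  have hst_succ : ∀ m, st (m+1) = insert (step (st m) m).2.1 (insert (step (st m) m).2.2 (st m)) :=
    fun m => rfl
  set vv : ℕ → V := fun m => (step (st m) m).2.1 with hvv
  set ww : ℕ → V := fun m => (step (st m) m).2.2 with hww
  set kk : ℕ → ℕ := fun m => (step (st m) m).1 with hkk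
  have hmem : ∀ m, vv m ∈ st (m+1) ∧ ww m ∈ st (m+1) := by
    intro m
    rw [hst_succ]
    constructor
    · exact Finset.mem_insert_self _ _
    · exact Finset.mem_insert_of_mem (Finset.mem_insert_self _ _)
  have hmono : ∀ m n, m ≤ n → st m ⊆ st n := by
    intro m n hmn
    induction n with
    | zero => simp [Nat.le_zero.mp hmn]
    | succ n ih =>
      rcases Nat.lt_or_ge m (n+1) with h | h
      · have := ih (Nat.lt_succ_iff.mp h)
        refine this.trans ?_
        rw [hst_succ]
        intro a ha
        exact Finset.mem_insert_of_mem (Finset.mem_insert_of_mem ha)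
      · have : m = n + 1 := le_antisymm hmn h
        subst this
        exact Finset.Subset.refl _
  have hnotmem : ∀ m, vv m ∉ st m ∧ ww m ∉ st m := by
    intro m
    exact ⟨(hstep (st m) m).2.2.1, (hstep (st m) m).2.2.2.1⟩
  have hne' : ∀ m, vv m ≠ ww m := fun m => (hstep (st m) m).2.1
  have hdisj : ∀ i j, vv i ≠ ww j := by
    intro i j
    rcases lt_trichotomy i j with h | h | h
    · intro heq
      have h1 : vv i ∈ st (i+1) := (hmem i).1
      have h2 : vv i ∈ st j := hmono _ _ h h1
      rw [heq] at h2
      exact (hnotmem j).2 h2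
    · rw [h]; exact hne' j
    · intro heq
      have h1 : ww j ∈ st (j+1) := (hmem j).2
      have h2 : ww j ∈ st i := hmono _ _ h h1
      rw [← heq] at h2
      exact (hnotmem i).1 h2
  -- Step 4: apply the extension property and derive the contradiction
  obtain ⟨x, hx1, hx2⟩ := hext (Set.range vv) (Set.range ww)
    (by
      rw [Set.disjoint_left]
      rintro a ⟨i, rfl⟩ ⟨j, hj⟩
      exact hdisj i j hj.symm)
    (Set.countable_range _) (Set.countable_range _)
  obtain ⟨N, hN⟩ := cont_fix {x}
  set τ := Equiv.swap (kk N + 1) (kk N + 2) with hτdef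
  have hkN : N ≤ kk N := (hstep (st N) N).1
  have hτfix : ∀ i, i ≤ N → τ i = i := by
    intro i hi
    have h1 : i ≠ kk N + 1 := by omega
    have h2 : i ≠ kk N + 2 := by omega
    exact Equiv.swap_apply_of_ne_of_ne h1 h2
  have hx_fix : (e τ : Equiv.Perm V) x = x := hN τ hτfix x (Finset.mem_singleton_self x)
  have hv_map : (e τ : Equiv.Perm V) (vv N) = ww N := (hstep (st N) N).2.2.2.2.1
  have haut : ∀ a b : V, G.Adj ((e τ : Equiv.Perm V) a) ((e τ : Equiv.Perm V) b) ↔ G.Adj a b :=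
    (e τ).2
  have hadj_v : G.Adj x (vv N) := hx1 _ ⟨N, rfl⟩
  have hadj_w : ¬ G.Adj x (ww N) := hx2 _ ⟨N, rfl⟩
  apply hadj_w
  have := (haut x (vv N)).mpr hadj_v
  rwa [hx_fix, hv_map] at this
end

section
/- Let κ be an uncountable cardinal and let G be a simple graph such that for every pair of disjoint sets A, B of vertices of G, each of cardinality strictly less than κ, there exists a vertex x adjacent to every vertex in A and to no vertex in B. Then Aut(G) is not universal: there exists a set S of vertices of G (which can be taken to be a countably infinite clique, so that the automorphism group of the induced subgraph on S is topologically isomorphic to S_∞) such that there is no injective continuous group homomorphism from the automorphism group of the induced subgraph on S into Aut(G). -/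
/-!
Suppose `φ : S_∞ →* Aut(G)` is injective and continuous. By continuity every vertex `x` is fixed
by the pointwise stabilizer of some finite `F x ⊆ ℕ`; by injectivity, the pointwise stabilizer of
any finite set moves vertices outside any given finite set. Enumerating the finite subsets `E n`
of `ℕ`, we build pairs `w n = φ g (v n) ≠ v n` with `g` fixing `E n` and `v n` fresh, and a set
`T` containing exactly one vertex of each pair. The extension property gives a vertex `x` adjacent
to exactly the pair vertices in `T`; for `E n = F x` the automorphism `φ g` fixes `x` and maps
`v n` to `w n`, so `x` is adjacent to both or to neither, a contradiction.
-/

open Function Equiv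

section PointwiseTopology

variable {α V : Type*}

theorem exists_finset_fixing_subset_of_isOpen {U : Set (Perm α)} (hU : IsOpen U)
    (h1 : (1 : Perm α) ∈ U) : ∃ F : Finset α, ∀ g : Perm α, (∀ a ∈ F, g a = a) → g ∈ U := by
  let _ : TopologicalSpace α := ⊥
  obtain ⟨Ω, hΩ, rfl⟩ := isOpen_induced_iff.mp hU
  obtain ⟨F, u, hu, hsub⟩ := isOpen_pi_iff.mp hΩ _ h1
  refine ⟨F, fun g hg => hsub fun a ha => ?_⟩
  simpa [hg a ha] using (hu a ha).2

theorem isOpen_setOf_apply_eq_s2 (v w : V) : IsOpen {p : Perm V | p v = w} := by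
  let _ : TopologicalSpace V := ⊥
  have : DiscreteTopology V := ⟨rfl⟩
  exact isOpen_induced ((isOpen_discrete {w}).preimage (continuous_apply (A := fun _ : V => V) v))

theorem exists_finset_fixing_of_continuous {φ : Perm α →* Perm V} (hφ : Continuous φ) (v : V) :
    ∃ F : Finset α, ∀ g : Perm α, (∀ a ∈ F, g a = a) → φ g v = v :=
  exists_finset_fixing_subset_of_isOpen (U := φ ⁻¹' {p | p v = v})
    ((isOpen_setOf_apply_eq_s2 v v).preimage hφ) (by simp)

end PointwiseTopology

section FiniteSupport

variable {α V : Type*}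

theorem finite_setOf_perm_fixing_compl (U : Finset V) :
    {f : Perm V | ∀ v ∉ U, f v = v}.Finite := by
  classical
  exact Set.finite_coe_iff.mp (Finite.of_equiv _ (Perm.subtypeEquivSubtypePerm (· ∈ U)))

theorem infinite_setOf_perm_fixing [Infinite α] (F : Finset α) :
    {g : Perm α | ∀ a ∈ F, g a = a}.Infinite := by
  classical
  have : Infinite {a // a ∉ F} := (F.finite_toSet.infinite_compl).to_subtype
  refine (Set.infinite_range_of_injective (Perm.ofSubtype_injective (p := (· ∉ F)))).mono ?_
  rintro _ ⟨f, rfl⟩ a ha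
  exact f.ofSubtype_apply_of_not_mem (not_not.mpr ha)

theorem exists_fixing_moves_outside [Infinite α] {φ : Perm α →* Perm V} (hφ : Injective φ)
    (F : Finset α) (U : Finset V) :
    ∃ g : Perm α, (∀ a ∈ F, g a = a) ∧ ∃ v ∉ U, φ g v ≠ v := by
  by_contra! h
  exact infinite_setOf_perm_fixing F
    (((finite_setOf_perm_fixing_compl U).preimage hφ.injOn).subset h)

end FiniteSupport

section Sequences

variable {V : Type*}

theorem exists_seq_fresh (P : ℕ → V → V → Prop)
    (h : ∀ n (s : Finset V), ∃ v w, v ∉ s ∧ P n v w) :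
    ∃ v w : ℕ → V, (∀ n, P n (v n) (w n)) ∧ ∀ m n, m < n → v n ≠ v m ∧ v n ≠ w m := by
  classical
  choose v w hv hP using h
  let s : ℕ → Finset V := fun n => Nat.rec ∅ (fun n s => insert (v n s) (insert (w n s) s)) n
  have hs : ∀ n, s (n + 1) = insert (v n (s n)) (insert (w n (s n)) (s n)) := fun _ => rfl
  have hmono : Monotone s := monotone_nat_of_le_succ fun n => by
    rw [hs]
    exact (Finset.subset_insert _ _).trans (Finset.subset_insert _ _)
  refine ⟨fun n => v n (s n), fun n => w n (s n), fun n => hP _ _, fun m n hmn => ?_⟩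
  dsimp only
  have hold : v m (s m) ∈ s n ∧ w m (s m) ∈ s n :=
    ⟨hmono hmn (by simp [hs]), hmono hmn (by simp [hs])⟩
  exact ⟨fun heq => hv n (s n) (heq ▸ hold.1), fun heq => hv n (s n) (heq ▸ hold.2)⟩

/-- The pairs `{v n, w n}` are the edges of a forest in which `v n` is a leaf when added, so they
can be two-coloured greedily. -/
theorem exists_set_separating_pairs (v w : ℕ → V) (hvw : ∀ n, v n ≠ w n)
    (hfresh : ∀ m n, m < n → v n ≠ v m ∧ v n ≠ w m) :
    ∃ T : Set V, ∀ n, v n ∈ T ↔ w n ∉ T := by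
  classical
  let col : ℕ → Set V := fun n =>
    Nat.rec (motive := fun _ => Set V) ∅ (fun n T => if w n ∈ T then T else insert (v n) T) n
  have hcol : ∀ n, col (n + 1) = if w n ∈ col n then col n else insert (v n) (col n) :=
    fun _ => rfl
  have hstep : ∀ n, col (n + 1) ⊆ insert (v n) (col n) := fun n => by
    rw [hcol]; split_ifs
    exacts [Set.subset_insert _ _, subset_rfl]
  have hmono : Monotone col := monotone_nat_of_le_succ fun n => by
    rw [hcol]; split_ifs
    exacts [subset_rfl, Set.subset_insert _ _]
  have hsub : ∀ n, col n ⊆ v '' Set.Iio n := by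
    intro n
    induction n with
    | zero => exact Set.empty_subset _
    | succ n ih =>
      have hIio : v '' Set.Iio n ⊆ v '' Set.Iio (n + 1) :=
        Set.image_mono (Set.Iio_subset_Iio n.le_succ)
      rw [hcol]; split_ifs
      · exact ih.trans hIio
      · exact Set.insert_subset ⟨n, n.lt_succ_self, rfl⟩ (ih.trans hIio)
  have hstable : ∀ n x, (∀ m, n ≤ m → v m ≠ x) → (x ∈ ⋃ k, col k ↔ x ∈ col n) := by
    intro n x hx
    refine ⟨fun hk => ?_, fun h => Set.mem_iUnion_of_mem n h⟩
    obtain ⟨k, hk⟩ := Set.mem_iUnion.mp hk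
    rcases le_total k n with hkn | hnk
    · exact hmono hkn hk
    obtain ⟨j, rfl⟩ := Nat.exists_eq_add_of_le hnk
    induction j with
    | zero => exact hk
    | succ j ih =>
      refine ih ?_ (Nat.le_add_right n j)
      exact (hstep _ hk).resolve_left fun h => hx (n + j) (Nat.le_add_right n j) h.symm
  refine ⟨⋃ k, col k, fun n => ?_⟩
  have hv : v n ∉ col n := fun h => by
    obtain ⟨m, hm, hvm⟩ := hsub n h
    exact (hfresh m n hm).1 hvm.symm
  rw [hstable (n + 1) (v n) fun m hm => (hfresh n m hm).1,
    hstable n (w n) fun m hm => (Nat.eq_or_lt_of_le hm).elim (· ▸ hvw n) fun h => (hfresh n m h).2,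
    hcol]
  by_cases h : w n ∈ col n <;> simp [h, hv]

end Sequences

section RandomGraph

variable {α V : Type*}

theorem relAut_top : relAut (⊤ : SimpleGraph V).Adj = ⊤ :=
  eq_top_iff.mpr fun g _ x y => by simp [g.injective.ne_iff]

theorem exists_countable_infinite_isClique {G : SimpleGraph V}
    (h : ∀ s : Finset V, ∃ x, ∀ y ∈ s, G.Adj x y) :
    ∃ S : Set V, S.Countable ∧ S.Infinite ∧ G.IsClique S := by
  have : Std.Symm G.Adj := ⟨fun _ _ h => h.symm⟩
  obtain ⟨f, -, hf⟩ := exists_seq_of_forall_finset_exists' (fun _ => True) G.Adj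
    fun s _ => (h s).imp fun x hx => ⟨trivial, fun y hy => (hx y hy).symm⟩
  have hinj : Injective f := fun m n hmn => by_contra fun hne => (hf hne).ne hmn
  exact ⟨_, Set.countable_range f, Set.infinite_range_of_injective hinj, hf.range_pairwise⟩

theorem not_continuous_of_injective_of_forall_mem_relAut [Countable α] [Infinite α]
    {G : SimpleGraph V}
    (hext : ∀ A B : Set V, Disjoint A B → A.Countable → B.Countable →
      ∃ x, (∀ y ∈ A, G.Adj x y) ∧ ∀ y ∈ B, ¬ G.Adj x y)
    {φ : Perm α →* Perm V} (hG : ∀ g, φ g ∈ relAut G.Adj) (hinj : Injective φ) :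
    ¬ Continuous φ := by
  intro hcont
  choose F hF using exists_finset_fixing_of_continuous hcont
  obtain ⟨E, hE⟩ := exists_surjective_nat (Finset α)
  obtain ⟨v, w, hvw, hfresh⟩ := exists_seq_fresh
    (fun n v w => v ≠ w ∧ ∃ g : Perm α, (∀ a ∈ E n, g a = a) ∧ φ g v = w) fun n U => by
      obtain ⟨g, hg, v, hv, hgv⟩ := exists_fixing_moves_outside hinj (E n) U
      exact ⟨v, φ g v, hv, Ne.symm hgv, g, hg, rfl⟩
  obtain ⟨T, hT⟩ := exists_set_separating_pairs v w (fun n => (hvw n).1) hfresh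
  have hW : (Set.range v ∪ Set.range w).Countable :=
    (Set.countable_range v).union (Set.countable_range w)
  obtain ⟨x, hxT, hxW⟩ := hext _ _ Set.disjoint_sdiff_inter.symm
    (hW.mono Set.inter_subset_left) (hW.mono Set.sdiff_subset)
  have hadj : ∀ y ∈ Set.range v ∪ Set.range w, G.Adj x y ↔ y ∈ T := fun y hy =>
    ⟨fun h => by_contra fun hyT => hxW y ⟨hy, hyT⟩ h, fun hyT => hxT y ⟨hy, hyT⟩⟩
  obtain ⟨n, hn⟩ := hE (F x)
  obtain ⟨g, hg, hgv⟩ := (hvw n).2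
  have hgx : φ g x = x := hF x g (hn ▸ hg)
  have hxvw := hG g x (v n)
  rw [hgx, hgv, hadj _ (.inl ⟨n, rfl⟩), hadj _ (.inr ⟨n, rfl⟩)] at hxvw
  exact iff_not_self (hxvw.trans (hT n))

end RandomGraph

open Cardinal in
/-- Let `κ` be an uncountable cardinal and `G` a simple graph such that for every pair of
disjoint sets of vertices `A, B` of cardinality `< κ` there is a vertex adjacent to every
vertex of `A` and to no vertex of `B` (the random graph of cardinality `κ`). Then `Aut(G)`
is not universal: there is a set `S` of vertices — a countably infinite clique, so that the
automorphism group of the induced subgraph on `S` is topologically isomorphic to `S_∞` —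
such that there is no injective continuous group homomorphism from the automorphism group
of the induced subgraph on `S` into `Aut(G)`. -/
theorem randomGraphAut_not_universal
    {V : Type u} (κ : Cardinal.{u}) (hκ : Cardinal.aleph0 < κ) (G : SimpleGraph V)
    (hext : ∀ A B : Set V, Disjoint A B → #A < κ → #B < κ →
      ∃ x : V, (∀ y ∈ A, G.Adj x y) ∧ ∀ y ∈ B, ¬ G.Adj x y) :
    ∃ S : Set V, S.Countable ∧ S.Infinite ∧ G.IsClique S ∧
      ¬ ∃ e : relAut (SimpleGraph.induce S G).Adj →* relAut G.Adj,
          Function.Injective e ∧ Continuous e := by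
  have hextCountable : ∀ A B : Set V, Disjoint A B → A.Countable → B.Countable →
      ∃ x, (∀ y ∈ A, G.Adj x y) ∧ ∀ y ∈ B, ¬ G.Adj x y := fun A B hAB hA hB =>
    hext A B hAB (hA.le_aleph0.trans_lt hκ) (hB.le_aleph0.trans_lt hκ)
  obtain ⟨S, hSc, hSi, hS⟩ := exists_countable_infinite_isClique fun s =>
    (hextCountable s ∅ (Set.disjoint_empty _) s.countable_toSet Set.countable_empty).imp
      fun _ h => h.1
  refine ⟨S, hSc, hSi, hS, ?_⟩
  rintro ⟨e, he, hec⟩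
  have := hSc.to_subtype
  have := hSi.to_subtype
  let ι : Perm S →* relAut (G.induce S).Adj := (MonoidHom.id _).codRestrict _ fun g => by
    rw [SimpleGraph.induce_eq_top.mpr hS, relAut_top]
    exact Subgroup.mem_top g
  have hι : Injective ι := fun _ _ h => congrArg Subtype.val h
  exact not_continuous_of_injective_of_forall_mem_relAut hextCountable
    (φ := (relAut G.Adj).subtype.comp (e.comp ι)) (fun g => (e (ι g)).2)
    (Subtype.val_injective.comp (he.comp hι))
    (continuous_subtype_val.comp (hec.comp (continuous_id.subtype_mk _)))
end

section
/- Let κ be an uncountable cardinal with κ^{<κ} = κ and let L be a linear order of cardinality κ that is κ-universal (every linear order of cardinality strictly less than κ order-embeds into L) and κ-ultrahomogeneous (every order isomorphism between two subsets of L of cardinality strictly less than κ extends to an order automorphism of L). Then there is no injective continuous group homomorphism from the group Aut(ℚ,<) of order automorphisms of the rationals into the group Aut(L) of order automorphisms of L. -/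
open Topology in
theorem exists_fixingSubgroup_subset_of_mem_nhds_one {V : Type*} {r : V → V → Prop}
    {U : Set (relAut r)} (hU : U ∈ 𝓝 1) :
    ∃ F : Finset V, (fixingSubgroup (relAut r) (F : Set V) : Set (relAut r)) ⊆ U := by
  let : TopologicalSpace V := ⊥
  have : DiscreteTopology V := ⟨rfl⟩
  have hind : IsInducing fun g : relAut r => ((g : Equiv.Perm V) : V → V) :=
    (IsInducing.mk rfl).comp IsInducing.subtypeVal
  rw [hind.nhds_eq_comap, nhds_pi, Filter.mem_comap] at hU
  obtain ⟨t, ht, hsub⟩ := hU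
  obtain ⟨F, u, hu, hFu⟩ := Filter.mem_pi'.1 ht
  refine ⟨F, fun g hg => hsub (hFu fun q hq => ?_)⟩
  rw [SetLike.mem_coe, mem_fixingSubgroup_iff] at hg
  show (g : Equiv.Perm V) q ∈ u q
  rw [show (g : Equiv.Perm V) q = q from hg q hq]
  exact mem_of_mem_nhds (hu q)

theorem exists_fixingSubgroup_le_comap_stabilizer {V W : Type*} {rV : V → V → Prop}
    {rW : W → W → Prop} {e : relAut rV →* relAut rW} (he : Continuous e) (x : W) :
    ∃ F : Finset V, fixingSubgroup (relAut rV) (F : Set V) ≤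
      (MulAction.stabilizer (relAut rW) x).comap e := by
  let : TopologicalSpace W := ⊥
  have : DiscreteTopology W := ⟨rfl⟩
  have hcoe : Continuous fun g : relAut rW => ((g : Equiv.Perm W) : W → W) :=
    continuous_induced_dom.comp continuous_subtype_val
  have hact : Continuous fun g : relAut rV => e g • x := ((continuous_apply x).comp hcoe).comp he
  exact exists_fixingSubgroup_subset_of_mem_nhds_one
    ((isOpen_discrete {x}).preimage hact |>.mem_nhds (by simp))

section LinearOrder

variable {L : Type*} [LinearOrder L]

theorem relAut.strictMono_smul (g : relAut (fun a b : L => a < b)) :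
    StrictMono (g • · : L → L) :=
  fun _ _ h => (g.2 _ _).2 h

theorem StrictMono.notMem_uIoo_of_apply_eq_self {f : L → L} (hf : StrictMono f) {x : L}
    (hx : f x = x) (a : L) : x ∉ Set.uIoo a (f a) := by
  rintro ⟨hlo, hhi⟩
  rcases lt_trichotomy a x with h | rfl | h
  · exact hhi.not_ge (sup_le h.le (hx ▸ hf h).le)
  · simp [hx] at hlo
  · exact hlo.not_ge (le_inf h.le (hx ▸ hf h).le)

theorem lt_smul_of_lt_smul_one {T : Multiplicative ℚ →* relAut (fun a b : L => a < b)} {x : L}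
    (h1 : x < T (.ofAdd 1) • x) {t : ℚ} (ht : 0 < t) : x < T (.ofAdd t) • x := by
  -- `f = T (1 / d)` has `f^[d] = T 1` and `f^[n] = T t` for `t = n / d`
  set f : L → L := (T (.ofAdd (t.den : ℚ)⁻¹) • ·)
  have hf : StrictMono f := relAut.strictMono_smul _
  have hiter : ∀ n : ℕ, f^[n] x = T (.ofAdd (n * (t.den : ℚ)⁻¹)) • x := fun n => by
    rw [smul_iterate, ← map_pow, ← ofAdd_nsmul, nsmul_eq_mul]
  have hfx : x < f x := by
    by_contra! hle
    have : f^[t.den] x ≤ f^[0] x := hf.monotone.antitone_iterate_of_map_le hle (Nat.zero_le _)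
    rw [hiter, mul_inv_cancel₀ (by exact_mod_cast t.den_nz)] at this
    exact this.not_gt h1
  have hnum : 0 < t.num.toNat := by simpa using Rat.num_pos.2 ht
  have ht_eq : (t.num.toNat : ℚ) * (t.den : ℚ)⁻¹ = t := by
    rw [← div_eq_mul_inv, ← Int.cast_natCast, Int.toNat_of_nonneg (Rat.num_pos.2 ht).le,
      Rat.num_div_den]
  have : f^[0] x < f^[t.num.toNat] x := hf.strictMono_iterate_of_lt_map hfx hnum
  rwa [Function.iterate_zero_apply, hiter, ht_eq] at this

theorem strictMono_smul_orbit_of_lt {T : Multiplicative ℚ →* relAut (fun a b : L => a < b)}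
    {x : L} (h1 : x < T (.ofAdd 1) • x) : StrictMono fun t : ℚ => T (.ofAdd t) • x := by
  intro s t hst
  have hsplit : T (.ofAdd t) • x = T (.ofAdd s) • T (.ofAdd (t - s)) • x := by
    rw [← mul_smul, ← map_mul, ← ofAdd_add, add_sub_cancel]
  show _ < T (.ofAdd t) • x
  rw [hsplit]
  exact relAut.strictMono_smul _ (lt_smul_of_lt_smul_one h1 (sub_pos.2 hst))

theorem strictMono_or_strictAnti_smul_orbit
    (T : Multiplicative ℚ →* relAut (fun a b : L => a < b)) {x : L} (hx : T (.ofAdd 1) • x ≠ x) :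
    StrictMono (fun t : ℚ => T (.ofAdd t) • x) ∨ StrictAnti (fun t : ℚ => T (.ofAdd t) • x) := by
  rcases hx.lt_or_gt with hlt | hgt
  · right
    have h1 : x < T (.ofAdd (-1)) • x := by
      have : T (.ofAdd (-1)) • T (.ofAdd 1) • x < T (.ofAdd (-1)) • x :=
        relAut.strictMono_smul _ hlt
      rwa [← mul_smul, ← map_mul, ← ofAdd_add, neg_add_cancel, ofAdd_zero, map_one,
        one_smul] at this
    have hmono := strictMono_smul_orbit_of_lt (T := T.comp invMonoidHom) (by simpa using h1)
    exact fun s t hst => by simpa using hmono (neg_lt_neg hst)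
  · exact .inl (strictMono_smul_orbit_of_lt hgt)

end LinearOrder

namespace Order.PartialIso

variable {α β : Type*} [LinearOrder α] [LinearOrder β]
  [Countable α] [DenselyOrdered α] [NoMinOrder α] [NoMaxOrder α] [Nonempty α]
  [Countable β] [DenselyOrdered β] [NoMinOrder β] [NoMaxOrder β] [Nonempty β]

theorem exists_orderIso_extending (f : PartialIso α β) :
    ∃ g : α ≃o β, ∀ p ∈ f.val, g p.1 = p.2 := by
  cases nonempty_encodable α
  cases nonempty_encodable β
  let D : α ⊕ β → Cofinal (PartialIso α β) := Sum.elim (definedAtLeft β) (definedAtRight α)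
  let I := idealOfCofinals f D
  have hcmp : ∀ p q : α × β, (∃ m ∈ I, p ∈ m.val) → (∃ m ∈ I, q ∈ m.val) →
      cmp p.1 q.1 = cmp p.2 q.2 := by
    rintro p q ⟨m, hm, hp⟩ ⟨m', hm', hq⟩
    obtain ⟨n, -, hmn, hm'n⟩ := I.directed _ hm _ hm'
    exact n.prop p (hmn hp) q (hm'n hq)
  have hF : ∀ a, ∃ b, ∃ m ∈ I, (a, b) ∈ m.val := fun a => by
    obtain ⟨m, ⟨b, hb⟩, hm⟩ := cofinal_meets_idealOfCofinals f D (.inl a)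
    exact ⟨b, m, hm, hb⟩
  have hG : ∀ b, ∃ a, ∃ m ∈ I, (a, b) ∈ m.val := fun b => by
    obtain ⟨m, ⟨a, ha⟩, hm⟩ := cofinal_meets_idealOfCofinals f D (.inr b)
    exact ⟨a, m, hm, ha⟩
  choose F hF using hF
  choose G hG using hG
  refine ⟨OrderIso.ofCmpEqCmp F G fun a b => hcmp (a, F a) (G b, b) (hF a) (hG b),
    fun p hp => ?_⟩
  exact (cmp_eq_eq_iff _ _).1
    (hcmp (p.1, F p.1) p (hF p.1) ⟨f, mem_idealOfCofinals _ _, hp⟩ ▸ cmp_self_eq_eq p.1)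

end Order.PartialIso

def OrderIso.toRelAut {α : Type*} [Preorder α] (f : α ≃o α) : relAut (fun a b : α => a < b) :=
  ⟨f.toEquiv, fun _ _ => f.lt_iff_lt⟩

def ratTranslation : Multiplicative ℚ →* relAut (fun a b : ℚ => a < b) where
  toFun t := (OrderIso.addRight t.toAdd).toRelAut
  map_one' := Subtype.ext <| Equiv.ext add_zero
  map_mul' _ _ := Subtype.ext <| Equiv.ext fun _ => (add_left_comm _ _ _).trans (add_comm _ _)

@[simp]
theorem ratTranslation_smul (t x : ℚ) : ratTranslation (.ofAdd t) • x = x + t := rfl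

@[simp]
theorem ratTranslation_inv_smul (t x : ℚ) : (ratTranslation (.ofAdd t))⁻¹ • x = x - t :=
  inv_smul_eq_iff.2 (sub_add_cancel x t).symm

theorem exists_relAut_fixing_and_translating (F₀ F : Finset ℚ) {t t' : ℚ}
    (h : ∀ p ∈ F₀, ∀ q ∈ F, q - p ∉ Set.uIcc t t') :
    ∃ g : relAut (fun a b : ℚ => a < b),
      (∀ p ∈ F₀, g • p = p) ∧ ∀ q ∈ F, g • (q - t) = q - t' := by
  have hcmp : ∀ p ∈ F₀, ∀ q ∈ F, cmp p (q - t) = cmp p (q - t') := by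
    intro p hp q hq
    have := h p hp q hq
    rw [Set.uIcc, Set.mem_Icc, not_and_or, not_le, not_le, lt_min_iff, max_lt_iff] at this
    rcases this with ⟨h1, h2⟩ | ⟨h1, h2⟩
    · rw [(cmp_eq_gt_iff _ _).2 (by linarith), (cmp_eq_gt_iff _ _).2 (by linarith)]
    · rw [(cmp_eq_lt_iff _ _).2 (by linarith), (cmp_eq_lt_iff _ _).2 (by linarith)]
  have hshift : ∀ s q q' : ℚ, cmp (q - s) (q' - s) = cmp q q' := fun s =>
    StrictMono.cmp_map_eq fun _ _ h => sub_lt_sub_right h s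
  let f : Order.PartialIso ℚ ℚ :=
    ⟨F₀.image (fun p => (p, p)) ∪ F.image (fun q => (q - t, q - t')), by
    simp only [Finset.mem_union, Finset.mem_image]
    rintro _ (⟨p, hp, rfl⟩ | ⟨q, hq, rfl⟩) _ (⟨p', hp', rfl⟩ | ⟨q', hq', rfl⟩)
    · rfl
    · exact hcmp p hp q' hq'
    · rw [← cmp_swap, hcmp p' hp' q hq, cmp_swap]
    · rw [hshift, hshift]⟩
  obtain ⟨g, hg⟩ := f.exists_orderIso_extending
  exact ⟨g.toRelAut, fun p hp => hg (p, p) (by simp [f, hp]),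
    fun q hq => hg (q - t, q - t') (by simp [f, hq])⟩

open Topology in
theorem Irrational.exists_rat_btwn_avoiding {β : ℝ} (hβ : Irrational β) {D : Set ℚ}
    (hD : D.Finite) : ∃ t t' : ℚ, (t : ℝ) < β ∧ β < t' ∧ ∀ d ∈ D, d ∉ Set.uIcc t t' := by
  have hU : ((↑) '' D : Set ℝ)ᶜ ∈ 𝓝 β :=
    (hD.image _).isClosed.isOpen_compl.mem_nhds fun ⟨d, _, hd⟩ => hβ.ne_rat d hd.symm
  obtain ⟨l, u, ⟨hl, hu⟩, hsub⟩ := mem_nhds_iff_exists_Ioo_subset.1 hU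
  obtain ⟨t, hlt, htβ⟩ := exists_rat_btwn hl
  obtain ⟨t', hβt', ht'u⟩ := exists_rat_btwn hu
  refine ⟨t, t', htβ, hβt', fun d hd hdI => hsub ⟨?_, ?_⟩ ⟨d, hd, rfl⟩⟩ <;>
    rw [Set.uIcc_of_le (by exact_mod_cast (htβ.trans hβt').le)] at hdI
  · exact hlt.trans_le (by exact_mod_cast hdI.1)
  · exact (show (d : ℝ) ≤ t' by exact_mod_cast hdI.2).trans_lt ht'u

section Homogeneous

open Cardinal

variable {L : Type u} [LinearOrder L] {κ : Cardinal.{u}}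

theorem exists_orderIso_apply_eq_of_homogeneous
    (hhom : ∀ A B : Set L, #A < κ → #B < κ → ∀ f : A ≃o B,
      ∃ g : L ≃o L, ∀ a : A, g (a : L) = (f a : L))
    {Z : Type u} [Preorder Z] (hZ : #Z < κ) (f g : Z ↪o L) :
    ∃ σ : L ≃o L, ∀ z, σ (f z) = g z := by
  obtain ⟨σ, hσ⟩ := hhom _ _ ((mk_range_eq f f.injective).trans_lt hZ)
    ((mk_range_eq g g.injective).trans_lt hZ) (f.orderIso.symm.trans g.orderIso)
  refine ⟨σ, fun z => ?_⟩
  rw [show f z = ((f.orderIso z : Set.range f) : L) from rfl, hσ]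
  simp [OrderIso.symm_apply_eq]

theorem exists_between_of_universal_of_homogeneous (hκ : ℵ₀ ≤ κ)
    (huniv : ∀ (Y : Type u) [LinearOrder Y], #Y < κ → Nonempty (Y ↪o L))
    (hhom : ∀ A B : Set L, #A < κ → #B < κ → ∀ f : A ≃o B,
      ∃ g : L ≃o L, ∀ a : A, g (a : L) = (f a : L))
    {A B : Set L} (hA : #A < κ) (hB : #B < κ) (hAB : ∀ a ∈ A, ∀ b ∈ B, a < b) :
    ∃ x, (∀ a ∈ A, a < x) ∧ ∀ b ∈ B, x < b := by
  obtain ⟨j⟩ := huniv (WithTop A ⊕ₗ B) <| by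
    simpa [Lex, WithTop, mk_option] using
      add_lt_of_lt hκ (add_lt_of_lt hκ hA (one_lt_aleph0.trans_le hκ)) hB
  let ι : A ⊕ₗ B ↪o WithTop A ⊕ₗ B := RelEmbedding.sumLexMap WithTop.coeOrderHom (.refl _)
  let incl : A ⊕ₗ B ↪o L := .ofStrictMono (fun z => Sum.elim (↑) (↑) (ofLex z)) <| by
    rintro (a | b) (a' | b') h
    · exact Subtype.coe_lt_coe.2 (Sum.Lex.inl_lt_inl_iff.1 h)
    · exact hAB _ a.2 _ b'.2
    · exact absurd h Sum.Lex.not_inr_lt_inl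
    · exact Subtype.coe_lt_coe.2 (Sum.Lex.inr_lt_inr_iff.1 h)
  obtain ⟨σ, hσ⟩ := exists_orderIso_apply_eq_of_homogeneous hhom
    (by simpa [Lex] using add_lt_of_lt hκ hA hB) (ι.trans j) incl
  refine ⟨σ (j (toLex (.inl ⊤))), fun a ha => ?_, fun b hb => ?_⟩
  · rw [← show σ (j (ι (toLex (.inl ⟨a, ha⟩)))) = a from hσ _]
    exact σ.strictMono (j.strictMono (Sum.Lex.inl_lt_inl_iff.2 (WithTop.coe_lt_top _)))
  · rw [← show σ (j (ι (toLex (.inr ⟨b, hb⟩)))) = b from hσ _]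
    exact σ.strictMono (j.strictMono (Sum.Lex.inl_lt_inr _ _))

theorem exists_mem_uIoo_of_strictMono_or_strictAnti (hκ : ℵ₀ < κ)
    (huniv : ∀ (Y : Type u) [LinearOrder Y], #Y < κ → Nonempty (Y ↪o L))
    (hhom : ∀ A B : Set L, #A < κ → #B < κ → ∀ f : A ≃o B,
      ∃ g : L ≃o L, ∀ a : A, g (a : L) = (f a : L))
    {ι : Type*} [Countable ι] [Preorder ι] {ρ : ι → L} (hρ : StrictMono ρ ∨ StrictAnti ρ)
    {S S' : Set ι} (hSS' : ∀ s ∈ S, ∀ s' ∈ S', s < s') :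
    ∃ x, ∀ s ∈ S, ∀ s' ∈ S', x ∈ Set.uIoo (ρ s) (ρ s') := by
  have hsmall (U : Set ι) : #(ρ '' U) < κ :=
    (le_aleph0_iff_set_countable.2 (U.to_countable.image ρ)).trans_lt hκ
  rcases hρ with hρ | hρ
  · obtain ⟨x, hlo, hhi⟩ := exists_between_of_universal_of_homogeneous hκ.le huniv hhom
      (hsmall S) (hsmall S') <| by
        rintro _ ⟨s, hs, rfl⟩ _ ⟨s', hs', rfl⟩
        exact hρ (hSS' s hs s' hs')
    exact ⟨x, fun s hs s' hs' => Set.mem_uIoo_of_lt (hlo _ (Set.mem_image_of_mem ρ hs))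
      (hhi _ (Set.mem_image_of_mem ρ hs'))⟩
  · obtain ⟨x, hlo, hhi⟩ := exists_between_of_universal_of_homogeneous hκ.le huniv hhom
      (hsmall S') (hsmall S) <| by
        rintro _ ⟨s', hs', rfl⟩ _ ⟨s, hs, rfl⟩
        exact hρ (hSS' s hs s' hs')
    exact ⟨x, fun s hs s' hs' => Set.mem_uIoo_of_gt (hlo _ (Set.mem_image_of_mem ρ hs'))
      (hhi _ (Set.mem_image_of_mem ρ hs))⟩

end Homogeneous

open Cardinal in
theorem no_continuous_embedding_of_AutQ_into_randomLinearOrderAut_general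
    {L : Type u} [LinearOrder L] (κ : Cardinal.{u})
    (hκ : Cardinal.aleph0 < κ)
    (huniv : ∀ (Y : Type u) [LinearOrder Y], #Y < κ → Nonempty (Y ↪o L))
    (hhom : ∀ A B : Set L, #A < κ → #B < κ → ∀ f : A ≃o B,
      ∃ g : L ≃o L, ∀ a : A, g (a : L) = (f a : L)) :
    ¬ ∃ e : relAut (fun a b : ℚ => a < b) →* relAut (fun a b : L => a < b),
        Function.Injective e ∧ Continuous e := by
  rintro ⟨e, he_inj, he_cont⟩
  let τ := ratTranslation
  obtain ⟨x₀, hx₀⟩ : ∃ x₀ : L, e (τ (.ofAdd 1)) • x₀ ≠ x₀ := by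
    by_contra! h
    have := congrArg (· • (0 : ℚ)) (he_inj ((Subtype.ext (Equiv.ext h)).trans (map_one e).symm))
    simp [τ] at this
  let ρ t := e (τ (.ofAdd t)) • x₀
  obtain ⟨x, hx⟩ := exists_mem_uIoo_of_strictMono_or_strictAnti hκ huniv hhom
    (strictMono_or_strictAnti_smul_orbit (e.comp τ) hx₀)
    (S := {t : ℚ | t < √2}) (S' := {t | √2 < t})
    fun s hs s' hs' => by exact_mod_cast (lt_trans hs hs' : (s : ℝ) < s')
  obtain ⟨F, hF⟩ := exists_fixingSubgroup_le_comap_stabilizer he_cont x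
  obtain ⟨F₀, hF₀⟩ := exists_fixingSubgroup_le_comap_stabilizer he_cont x₀
  obtain ⟨t, t', ht, ht', hD⟩ := irrational_sqrt_two.exists_rat_btwn_avoiding
    (F.finite_toSet.image2 (· - ·) F₀.finite_toSet)
  obtain ⟨h, hh₀, hh⟩ := exists_relAut_fixing_and_translating F₀ F
    fun p hp q hq => hD _ (Set.mem_image2_of_mem hq hp)
  let g := τ (.ofAdd t') * h * (τ (.ofAdd t))⁻¹
  have hgx : e g • x = x := hF <| (mem_fixingSubgroup_iff _).2 fun q hq => by
    simp [g, τ, mul_smul, hh q hq]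
  have hgρ : e g • ρ t = ρ t' := by
    have : e h • x₀ = x₀ := hF₀ ((mem_fixingSubgroup_iff _).2 hh₀)
    simp [ρ, g, mul_smul, this]
  exact (relAut.strictMono_smul (e g)).notMem_uIoo_of_apply_eq_self hgx (ρ t)
    (hgρ ▸ hx t ht t' ht')

open Cardinal in
/-- Let `κ` be an uncountable cardinal with `κ^{<κ} = κ` and let `L` be a linear order of
cardinality `κ` which is `κ`-universal (every linear order of cardinality `< κ` order-embeds
into it) and `κ`-ultrahomogeneous (every order isomorphism between two subsets of
cardinality `< κ` extends to an order automorphism). Then there is no injective continuous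
group homomorphism from `Aut(ℚ, <)` into `Aut(L)` (both with the pointwise convergence
topology). -/
theorem no_continuous_embedding_of_AutQ_into_randomLinearOrderAut
    {L : Type u} [LinearOrder L] (κ : Cardinal.{u})
    (hκ : Cardinal.aleph0 < κ) (hpow : κ ^< κ = κ)
    (hcard : #L = κ)
    (huniv : ∀ (Y : Type u) [LinearOrder Y], #Y < κ → Nonempty (Y ↪o L))
    (hhom : ∀ A B : Set L, #A < κ → #B < κ → ∀ f : A ≃o B,
      ∃ g : L ≃o L, ∀ a : A, g (a : L) = (f a : L)) :
    ¬ ∃ e : relAut (fun a b : ℚ => a < b) →* relAut (fun a b : L => a < b),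
        Function.Injective e ∧ Continuous e :=
  no_continuous_embedding_of_AutQ_into_randomLinearOrderAut_general κ hκ huniv hhom
end

section
/- Let κ be an uncountable cardinal with κ^{<κ} = κ and let L be a linear order of cardinality κ that is κ-universal (every linear order of cardinality strictly less than κ order-embeds into L) and κ-ultrahomogeneous (every order isomorphism between two subsets of L of cardinality strictly less than κ extends to an order automorphism of L). Then Aut(L) is not universal: there exists a subset Q ⊆ L whose induced linear order is order-isomorphic to (ℚ,<) and such that there is no injective continuous group homomorphism from the group of order automorphisms of the induced order on Q into Aut(L). -/
open Set FirstOrder FirstOrder.Language Cardinal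

section DenseOrder

variable {α : Type*} [LinearOrder α]

theorem Order.exists_orderIso_extend_of_finite [Countable α] [DenselyOrdered α] [NoMinOrder α]
    [NoMaxOrder α] [Nonempty α] {S : Set α} (hS : S.Finite) {f : S → α} (hf : StrictMono f) :
    ∃ g : α ≃o α, ∀ x : S, g x = f x := by
  let := orderStructure α
  have : Language.order.OrderedStructure α := ⟨fun _ => Iff.rfl⟩
  let := StrongHomClass.toOrderIsoClass Language.order α α (α ≃[Language.order] α)
  let T := Substructure.closure Language.order S
  have hT : (T : Set α) = S := Substructure.closure_eq_of_isRelational _ S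
  let f' : T ↪o α :=
    (OrderIso.setCongr _ _ hT).toOrderEmbedding.trans (OrderEmbedding.ofStrictMono f hf)
  obtain ⟨g, hg⟩ := (isFraisseLimit_of_countable_nonempty_dlo α).ultrahomogeneous T
    (Substructure.fg_closure hS) (StrongHomClass.toEmbedding f')
  refine ⟨g, fun x => ?_⟩
  have hxT : (x : α) ∈ T := by rw [← SetLike.mem_coe, hT]; exact x.2
  exact (DFunLike.congr_fun hg ⟨x, hxT⟩).symm

theorem Order.exists_orderIso_apply_eq_of_forall_notMem_uIcc [Countable α] [DenselyOrdered α]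
    [NoMinOrder α] [NoMaxOrder α] (F : Finset α) {x y : α}
    (hF : ∀ p ∈ F, p ∉ uIcc x y) : ∃ g : α ≃o α, g x = y ∧ ∀ p ∈ F, g p = p := by
  have : Nonempty α := ⟨x⟩
  have hxF : x ∉ F := fun hx => hF x hx left_mem_uIcc
  let f : (insert x (F : Set α) : Set α) → α := fun p => if (p : α) = x then y else p
  have hf : StrictMono f := by
    rintro ⟨a, ha⟩ ⟨b, hb⟩ (hab : a < b)
    simp only [f]
    rcases ha with rfl | haF <;> rcases hb with rfl | hbF
    · exact absurd hab (lt_irrefl _)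
    · rw [if_pos rfl, if_neg hab.ne']
      by_contra! hby
      exact hF b hbF (mem_uIcc.2 (Or.inl ⟨hab.le, hby⟩))
    · rw [if_neg hab.ne, if_pos rfl]
      by_contra! hya
      exact hF a haF (mem_uIcc.2 (Or.inr ⟨hya, hab.le⟩))
    · rw [if_neg (ne_of_mem_of_not_mem haF hxF), if_neg (ne_of_mem_of_not_mem hbF hxF)]
      exact hab
  obtain ⟨g, hg⟩ := Order.exists_orderIso_extend_of_finite (F.finite_toSet.insert x) hf
  refine ⟨g, by simpa [f] using hg ⟨x, mem_insert x _⟩, fun p hp => ?_⟩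
  simpa [f, ne_of_mem_of_not_mem hp hxF] using hg ⟨p, mem_insert_of_mem x hp⟩

theorem Order.exists_orderIso_apply_eq_of_mem_Ioo [Countable α] [DenselyOrdered α]
    [NoMinOrder α] [NoMaxOrder α] (F : Finset α) {u v x y : α}
    (hF : ∀ p ∈ F, p ∉ Ioo u v) (hx : x ∈ Ioo u v) (hy : y ∈ Ioo u v) :
    ∃ g : α ≃o α, g x = y ∧ ∀ p ∈ F, g p = p :=
  Order.exists_orderIso_apply_eq_of_forall_notMem_uIcc F fun p hp hpxy =>
    hF p hp (ordConnected_Ioo.uIcc_subset hx hy hpxy)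

theorem Order.exists_orderIso_apply_eq_apply_eq [Countable α] [DenselyOrdered α]
    [NoMinOrder α] [NoMaxOrder α] (F : Finset α) {u v s s' r r' : α}
    (hF : ∀ p ∈ F, p ∉ Ioo u v) (hs : s ∈ Ioo u v) (hs' : s' ∈ Ioo u v) (hr : r ∈ Ioo u v)
    (hr' : r' ∈ Ioo u v) (hss' : s < s') (hrr' : r < r') :
    ∃ g : α ≃o α, g s = r ∧ g s' = r' ∧ ∀ p ∈ F, g p = p := by
  obtain ⟨g₁, hg₁s, hg₁F⟩ :=
    Order.exists_orderIso_apply_eq_of_mem_Ioo (insert u (insert v F)) (by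
      simp only [Finset.mem_insert, forall_eq_or_imp, mem_Ioo, lt_irrefl, false_and, and_false,
        not_false_eq_true, true_and]
      exact hF) hs hr
  -- fixing `u` and `v` keeps `g₁ s'` inside `(r, v)`
  have hg₁s' : g₁ s' ∈ Ioo r v := by
    refine ⟨hg₁s ▸ g₁.strictMono hss', ?_⟩
    simpa [hg₁F v (by simp)] using g₁.strictMono hs'.2
  obtain ⟨g₂, hg₂s', hg₂F⟩ :=
    Order.exists_orderIso_apply_eq_of_mem_Ioo (insert r (insert u (insert v F))) (by
      simp only [Finset.mem_insert, forall_eq_or_imp, mem_Ioo, lt_irrefl, false_and, and_false,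
        not_false_eq_true, true_and]
      exact ⟨fun h => h.1.not_gt hr.1, fun p hp h => hF p hp ⟨hr.1.trans h.1, h.2⟩⟩)
      hg₁s' ⟨hrr', hr'.2⟩
  refine ⟨g₂ * g₁, ?_, hg₂s', fun p hp => ?_⟩
  · rw [RelIso.mul_apply, hg₁s, hg₂F r (by simp)]
  · rw [RelIso.mul_apply, hg₁F p (by simp [hp]), hg₂F p (by simp [hp])]

theorem Order.exists_Ioo_forall_notMem [DenselyOrdered α] [NoMinOrder α] [NoMaxOrder α]
    (F : Finset α) {a b : α} (hF : ∀ p ∈ F, p ∉ uIcc a b) :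
    ∃ u v, a ∈ Ioo u v ∧ b ∈ Ioo u v ∧ ∀ p ∈ F, p ∉ Ioo u v := by
  have : Nonempty α := ⟨a⟩
  obtain ⟨u, hFu, hu⟩ := Order.exists_between_finsets (F.filter (· < a ⊓ b)) {a ⊓ b}
    (by simp +contextual)
  obtain ⟨v, hv, hFv⟩ := Order.exists_between_finsets {a ⊔ b} (F.filter (a ⊔ b < ·))
    (by simp +contextual)
  simp only [Finset.mem_singleton, forall_eq, Finset.mem_filter, and_imp] at hu hv hFu hFv
  refine ⟨u, v, ⟨hu.trans_le inf_le_left, le_sup_left.trans_lt hv⟩,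
    ⟨hu.trans_le inf_le_right, le_sup_right.trans_lt hv⟩, fun p hp hpuv => ?_⟩
  rcases lt_or_ge p (a ⊓ b) with h | h
  · exact (hFu p hp h).not_gt hpuv.1
  rcases le_or_gt p (a ⊔ b) with h' | h'
  · exact hF p hp ⟨h, h'⟩
  · exact (hFv p hp h').not_gt hpuv.2

theorem OrderIso.forall_notMem_uIcc_apply {w : α ≃o α} {R : Finset α} {c : α} (hc : c ∉ R)
    (hw : ∀ p ∈ R, w p = p) : ∀ p ∈ R, p ∉ uIcc c (w c) := by
  intro p hp hpc
  have hwp := hw p hp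
  rcases lt_or_gt_of_ne (ne_of_mem_of_not_mem hp hc) with h | h
  · have := w.strictMono h
    rcases mem_uIcc.1 hpc with ⟨h1, -⟩ | ⟨h1, -⟩ <;> order
  · have := w.strictMono h
    rcases mem_uIcc.1 hpc with ⟨-, h1⟩ | ⟨-, h1⟩ <;> order

theorem strictMonoOn_or_strictAntiOn_of_cmp_eq {β : Type*} [LinearOrder β] {f : α → β}
    {I : Set α}
    (hf : ∀ s ∈ I, ∀ s' ∈ I, ∀ r ∈ I, ∀ r' ∈ I, s < s' → r < r' →
      cmp (f s) (f s') = cmp (f r) (f r'))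
    (hI : ∃ a ∈ I, ∃ b ∈ I, f a ≠ f b) : StrictMonoOn f I ∨ StrictAntiOn f I := by
  obtain ⟨a, ha, b, hb, hab, hfab⟩ : ∃ a ∈ I, ∃ b ∈ I, a < b ∧ f a ≠ f b := by
    obtain ⟨a, ha, b, hb, hfab⟩ := hI
    rcases lt_or_gt_of_ne (ne_of_apply_ne f hfab) with h | h
    · exact ⟨a, ha, b, hb, h, hfab⟩
    · exact ⟨b, hb, a, ha, h, hfab.symm⟩
  rcases lt_or_gt_of_ne hfab with h | h
  · refine Or.inl fun s hs s' hs' hss' => ?_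
    rwa [← cmp_eq_lt_iff, hf s hs s' hs' a ha b hb hss' hab, cmp_eq_lt_iff]
  · refine Or.inr fun s hs s' hs' hss' => ?_
    rwa [← cmp_eq_gt_iff, hf s hs s' hs' a ha b hb hss' hab, cmp_eq_gt_iff]

end DenseOrder

section Support

variable {α L : Type*} [LinearOrder α] [LinearOrder L]

def IsSupport (σ : (α ≃o α) → (L ≃o L)) (P : Finset α) (y : L) : Prop :=
  ∀ g : α ≃o α, (∀ p ∈ P, g p = p) → σ g y = y

theorem IsSupport.exists_insert_not_isSupport {σ : (α ≃o α) → (L ≃o L)}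
    {P : Finset α} {y : L} (hP : IsSupport σ P y) (hy : ∃ g, σ g y ≠ y) :
    ∃ R c, c ∉ R ∧ IsSupport σ (insert c R) y ∧ ¬ IsSupport σ R y := by
  induction P using Finset.induction_on with
  | empty =>
    obtain ⟨g, hg⟩ := hy
    exact absurd (hP g (by simp)) hg
  | insert c R hcR ih =>
    by_cases hR : IsSupport σ R y
    exacts [ih hR, ⟨R, c, hcR, hP, hR⟩]

variable (ρ : (α ≃o α) →* (L ≃o L))

theorem IsSupport.map_apply_eq {P : Finset α} {y : L} (hy : IsSupport ρ P y) {g g' : α ≃o α}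
    (h : ∀ p ∈ P, g p = g' p) : ρ g y = ρ g' y := by
  have hfix := hy (g'⁻¹ * g) fun p hp => by rw [RelIso.mul_apply, h p hp, RelIso.inv_apply_self]
  rw [map_mul, RelIso.mul_apply, map_inv] at hfix
  calc ρ g y = ρ g' ((ρ g')⁻¹ (ρ g y)) := (RelIso.apply_inv_self _ _).symm
    _ = ρ g' y := by rw [hfix]

-- `g c ↦ ρ g y` on the orbit of `c` under the pointwise stabiliser of `R`; well defined when
-- `insert c R` supports `y`.
open Classical in
noncomputable def orbitMap (R : Finset α) (c : α) (y : L) (s : α) : L :=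
  if h : ∃ g : α ≃o α, (∀ p ∈ R, g p = p) ∧ g c = s then ρ h.choose y else y

variable {R : Finset α} {c : α} {y : L}

theorem orbitMap_apply (hy : IsSupport ρ (insert c R) y) {g : α ≃o α} (hg : ∀ p ∈ R, g p = p) :
    orbitMap ρ R c y (g c) = ρ g y := by
  have h : ∃ g' : α ≃o α, (∀ p ∈ R, g' p = p) ∧ g' c = g c := ⟨g, hg, rfl⟩
  rw [orbitMap, dif_pos h]
  refine hy.map_apply_eq ρ fun p hp => ?_
  rcases Finset.mem_insert.1 hp with rfl | hp
  · exact h.choose_spec.2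
  · rw [h.choose_spec.1 p hp, hg p hp]

variable [Countable α] [DenselyOrdered α] [NoMinOrder α] [NoMaxOrder α] {u v : α}

theorem orbitMap_apply_of_mem_Ioo (hy : IsSupport ρ (insert c R) y) (hR : ∀ p ∈ R, p ∉ Ioo u v)
    (hc : c ∈ Ioo u v) {g : α ≃o α} (hg : ∀ p ∈ R, g p = p) {s : α} (hs : s ∈ Ioo u v) :
    orbitMap ρ R c y (g s) = ρ g (orbitMap ρ R c y s) := by
  obtain ⟨h, rfl, hh⟩ := Order.exists_orderIso_apply_eq_of_mem_Ioo R hR hc hs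
  have hgh : ∀ p ∈ R, (g * h) p = p := fun p hp => by rw [RelIso.mul_apply, hh p hp, hg p hp]
  rw [← RelIso.mul_apply, orbitMap_apply ρ hy hgh, orbitMap_apply ρ hy hh, map_mul,
    RelIso.mul_apply]

theorem cmp_orbitMap_eq (hy : IsSupport ρ (insert c R) y) (hR : ∀ p ∈ R, p ∉ Ioo u v)
    (hc : c ∈ Ioo u v) :
    ∀ s ∈ Ioo u v, ∀ s' ∈ Ioo u v, ∀ r ∈ Ioo u v, ∀ r' ∈ Ioo u v, s < s' → r < r' →
      cmp (orbitMap ρ R c y s) (orbitMap ρ R c y s') =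
        cmp (orbitMap ρ R c y r) (orbitMap ρ R c y r') := by
  intro s hs s' hs' r hr r' hr' hss' hrr'
  obtain ⟨k, rfl, rfl, hk⟩ :=
    Order.exists_orderIso_apply_eq_apply_eq R hR hs hs' hr hr' hss' hrr'
  rw [orbitMap_apply_of_mem_Ioo ρ hy hR hc hk hs, orbitMap_apply_of_mem_Ioo ρ hy hR hc hk hs',
    (ρ k).strictMono.cmp_map_eq]

end Support

-- Hausdorff's `η₁` property.
def IsEtaOne (L : Type*) [LinearOrder L] : Prop :=
  ∀ A B : Set L, A.Countable → B.Countable → (∀ a ∈ A, ∀ b ∈ B, a < b) →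
    ∃ z, (∀ a ∈ A, a < z) ∧ ∀ b ∈ B, z < b

theorem Rat.exists_forall_notMem_uIcc_of_irrational {γ : ℝ} (hγ : Irrational γ) (P : Finset ℚ)
    {u v : ℚ} (hu : (u : ℝ) < γ) (hv : γ < v) :
    ∃ s r : ℚ, s ∈ Ioo u v ∧ r ∈ Ioo u v ∧ (s : ℝ) < γ ∧ γ < r ∧ ∀ p ∈ P, p ∉ uIcc s r := by
  obtain ⟨a, b, hγab, -, hab⟩ := Order.exists_Ioo_forall_notMem
    ((insert u (insert v P)).image ((↑) : ℚ → ℝ)) (a := γ) (b := γ) (by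
      simp only [uIcc_self, Finset.mem_image, mem_singleton_iff]
      rintro _ ⟨q, -, rfl⟩ h
      exact hγ.ne_rat q h.symm)
  have hout : ∀ q ∈ insert u (insert v P), (q : ℝ) ≤ a ∨ b ≤ q := fun q hq => by
    simpa only [mem_Ioo, not_and_or, not_lt] using hab q (Finset.mem_image_of_mem _ hq)
  obtain ⟨s, has, hsγ⟩ := exists_rat_btwn hγab.1
  obtain ⟨r, hγr, hrb⟩ := exists_rat_btwn hγab.2
  have hus : u < s := by
    rcases hout u (by simp) with h | h
    · exact_mod_cast h.trans_lt has
    · exact absurd (hu.trans hγab.2) h.not_gt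
  have hrv : r < v := by
    rcases hout v (by simp) with h | h
    · exact absurd (hγab.1.trans hv) h.not_gt
    · exact_mod_cast hrb.trans_le h
  have hsr : s < r := by exact_mod_cast hsγ.trans hγr
  refine ⟨s, r, ⟨hus, hsr.trans hrv⟩, ⟨hus.trans hsr, hrv⟩, hsγ, hγr, fun p hp hpsr => ?_⟩
  rw [uIcc_of_le hsr.le] at hpsr
  have hsp : (s : ℝ) ≤ p := by exact_mod_cast hpsr.1
  have hpr : (p : ℝ) ≤ r := by exact_mod_cast hpsr.2
  rcases hout p (by simp [hp]) with h | h
  · exact has.not_ge (hsp.trans h)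
  · exact hrb.not_ge (h.trans hpr)

theorem Rat.not_strictMonoOn_or_strictAntiOn_of_isEtaOne {M : Type*} [LinearOrder M]
    (hM : IsEtaOne M) {σ : (ℚ ≃o ℚ) → (M ≃o M)} (hσ : ∀ z, ∃ P, IsSupport σ P z)
    {R : Finset ℚ} {u v : ℚ} (huv : u < v) (hR : ∀ p ∈ R, p ∉ Ioo u v) {f : ℚ → M}
    (hf : ∀ g : ℚ ≃o ℚ, (∀ p ∈ R, g p = p) → ∀ s ∈ Ioo u v, f (g s) = σ g (f s)) :
    ¬ (StrictMonoOn f (Ioo u v) ∨ StrictAntiOn f (Ioo u v)) := by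
  intro hmono
  obtain ⟨γ, hγ, huγ, hγv⟩ := exists_irrational_btwn (Rat.cast_lt.2 huv)
  -- `z` fills the gap that the irrational cut `γ` leaves in the image of `f`
  obtain ⟨z, hz⟩ : ∃ z, ∀ s ∈ Ioo u v, ∀ r ∈ Ioo u v, (s : ℝ) < γ → γ < r →
      (f s < z ∧ z < f r) ∨ (f r < z ∧ z < f s) := by
    have hlo := (Set.to_countable {s ∈ Ioo u v | (s : ℝ) < γ}).image f
    have hhi := (Set.to_countable {r ∈ Ioo u v | γ < (r : ℝ)}).image f
    have hsr : ∀ {s r : ℚ}, (s : ℝ) < γ → γ < r → s < r := fun h h' => by exact_mod_cast h.trans h'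
    rcases hmono with hmono | hanti
    · obtain ⟨z, hlo, hhi⟩ := hM _ _ hlo hhi (by
        rintro _ ⟨s, hs, rfl⟩ _ ⟨r, hr, rfl⟩
        exact hmono hs.1 hr.1 (hsr hs.2 hr.2))
      exact ⟨z, fun s hs r hr hsγ hγr =>
        Or.inl ⟨hlo _ ⟨s, ⟨hs, hsγ⟩, rfl⟩, hhi _ ⟨r, ⟨hr, hγr⟩, rfl⟩⟩⟩
    · obtain ⟨z, hhi, hlo⟩ := hM _ _ hhi hlo (by
        rintro _ ⟨r, hr, rfl⟩ _ ⟨s, hs, rfl⟩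
        exact hanti hs.1 hr.1 (hsr hs.2 hr.2))
      exact ⟨z, fun s hs r hr hsγ hγr =>
        Or.inr ⟨hhi _ ⟨r, ⟨hr, hγr⟩, rfl⟩, hlo _ ⟨s, ⟨hs, hsγ⟩, rfl⟩⟩⟩
  obtain ⟨P, hP⟩ := hσ z
  obtain ⟨s, r, hs, hr, hsγ, hγr, hPsr⟩ :=
    Rat.exists_forall_notMem_uIcc_of_irrational hγ P huγ hγv
  obtain ⟨g, hgs, hg⟩ := Order.exists_orderIso_apply_eq_of_forall_notMem_uIcc (P ∪ R) (x := s)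
    (y := r) fun p hp => (Finset.mem_union.1 hp).elim (hPsr p) fun hpR hpsr =>
      hR p hpR (ordConnected_Ioo.uIcc_subset hs hr hpsr)
  have hfr : f r = σ g (f s) := hgs ▸ hf g (fun p hp => hg p (Finset.mem_union_right _ hp)) s hs
  have hgz : σ g z = z := hP g fun p hp => hg p (Finset.mem_union_left _ hp)
  rcases hz s hs r hr hsγ hγr with ⟨hsz, hzr⟩ | ⟨hrz, hzs⟩
  · have := (σ g).strictMono hsz
    rw [← hfr, hgz] at this
    exact lt_asymm this hzr
  · have := (σ g).strictMono hzs
    rw [← hfr, hgz] at this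
    exact lt_asymm this hrz

theorem Rat.orderIsoHom_eq_one_of_isEtaOne {L : Type*} [LinearOrder L] (hL : IsEtaOne L)
    (ρ : (ℚ ≃o ℚ) →* (L ≃o L)) (hρ : ∀ z, ∃ P, IsSupport ρ P z) : ρ = 1 := by
  by_contra hne
  obtain ⟨g₀, y, hy⟩ : ∃ g y, ρ g y ≠ y := by
    contrapose! hne
    ext g z
    exact hne g z
  obtain ⟨P, hP⟩ := hρ y
  obtain ⟨R, c, hcR, hRc, hR⟩ := hP.exists_insert_not_isSupport ⟨g₀, hy⟩
  obtain ⟨w, hwR, hwy⟩ : ∃ w : ℚ ≃o ℚ, (∀ p ∈ R, w p = p) ∧ ρ w y ≠ y := by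
    simpa [IsSupport] using hR
  obtain ⟨u, v, hc, hwc, hRuv⟩ :=
    Order.exists_Ioo_forall_notMem R (OrderIso.forall_notMem_uIcc_apply hcR hwR)
  have hyc : orbitMap ρ R c y c = y := by
    simpa using orbitMap_apply ρ hRc (g := 1) fun _ _ => rfl
  have hmono := strictMonoOn_or_strictAntiOn_of_cmp_eq (cmp_orbitMap_eq ρ hRc hRuv hc)
    ⟨c, hc, w c, hwc, by rw [hyc, orbitMap_apply ρ hRc hwR]; exact hwy.symm⟩
  exact Rat.not_strictMonoOn_or_strictAntiOn_of_isEtaOne hL hρ (hc.1.trans hc.2) hRuv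
    (fun g hg s hs => orbitMap_apply_of_mem_Ioo ρ hRc hRuv hc hg hs) hmono

section Saturation

universe u

variable {L : Type u} [LinearOrder L] {κ : Cardinal.{u}}
  (huniv : ∀ (Y : Type u) [LinearOrder Y], #Y < κ → Nonempty (Y ↪o L))
  (hhom : ∀ A B : Set L, #A < κ → #B < κ → ∀ f : A ≃o B,
    ∃ g : L ≃o L, ∀ a : A, g (a : L) = (f a : L))
include huniv hhom

theorem exists_orderEmbedding_apply_eq {C : Set L} (hC : #C < κ) {Y : Type u} [LinearOrder Y]
    (hY : #Y < κ) (j : C ↪o Y) : ∃ h : Y ↪o L, ∀ c : C, h (j c) = c := by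
  obtain ⟨emb⟩ := huniv Y hY
  let F : C ↪o L := j.trans emb
  obtain ⟨g, hg⟩ := hhom C (range F) hC (mk_range_le.trans_lt hC) F.orderIso
  exact ⟨emb.trans g.symm.toOrderEmbedding, fun c => g.symm_apply_eq.2 (hg c).symm⟩

theorem isEtaOne_of_universal_of_homogeneous (hκ : ℵ₀ < κ) : IsEtaOne L := by
  classical
  intro A B hA hB hAB
  let C := A ∪ B
  have : Countable C := (hA.union hB).to_subtype
  have : Countable (Bool ×ₗ WithBot C) := inferInstanceAs (Countable (Bool × WithBot C))
  -- order `A ∪ B` inside `Bool ×ₗ WithBot C` so that `(true, ⊥)` lies between `A` and `B`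
  let j : C → Bool ×ₗ WithBot C := fun c => toLex (decide ((c : L) ∈ B), (c : WithBot C))
  have hj : StrictMono j := by
    intro c d hcd
    refine Prod.Lex.toLex_strictMono (Prod.mk_lt_mk_of_le_of_lt ?_ (WithBot.coe_lt_coe.2 hcd))
    refine Bool.le_iff_imp.2 fun hcB => decide_eq_true ?_
    rcases d.2 with hdA | hdB
    · exact absurd (hAB _ hdA _ (of_decide_eq_true hcB)) hcd.not_gt
    · exact hdB
  obtain ⟨h, hh⟩ := exists_orderEmbedding_apply_eq huniv hhom ((hA.union hB).le_aleph0.trans_lt hκ)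
    (mk_le_aleph0.trans_lt hκ) (OrderEmbedding.ofStrictMono j hj)
  refine ⟨h (toLex (true, ⊥)), fun a ha => ?_, fun b hb => ?_⟩
  · refine (hh ⟨a, Or.inl ha⟩).symm.trans_lt (h.strictMono (Prod.Lex.toLex_lt_toLex.2 (Or.inl ?_)))
    simp [decide_eq_false fun hb : a ∈ B => (hAB a ha a hb).false]
  · refine (h.strictMono (Prod.Lex.toLex_lt_toLex.2 (Or.inr ⟨?_, WithBot.bot_lt_coe _⟩))).trans_eq
      (hh ⟨b, Or.inr hb⟩)
    simpa [j] using hb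

end Saturation

def relAutLtMulEquiv (α : Type*) [LinearOrder α] : relAut (fun a b : α => a < b) ≃* (α ≃o α) where
  toFun g := ⟨(g : Equiv.Perm α), fun {a b} => by simpa only [not_lt] using not_congr (g.2 b a)⟩
  invFun f := ⟨f.toEquiv, fun _ _ => f.lt_iff_lt⟩
  left_inv _ := rfl
  right_inv _ := rfl
  map_mul' _ _ := rfl

def OrderIso.autCongr {α β : Type*} [LE α] [LE β] (e : α ≃o β) : (α ≃o α) ≃* (β ≃o β) where
  toFun g := e.symm.trans (g.trans e)
  invFun g := e.trans (g.trans e.symm)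
  left_inv g := by ext; simp
  right_inv g := by ext; simp
  map_mul' g h := by ext; simp [RelIso.mul_apply]

theorem Equiv.Perm.isOpen_setOf_apply_eq {W : Type*} (z : W) :
    IsOpen {k : Equiv.Perm W | k z = z} := by
  let _ : TopologicalSpace W := ⊥
  have : DiscreteTopology W := ⟨rfl⟩
  have hz : Continuous fun k : Equiv.Perm W => k z :=
    (continuous_apply z).comp continuous_induced_dom
  exact (isOpen_discrete {z}).preimage hz

theorem Equiv.Perm.exists_finset_forall_mem_of_isOpen {V : Type*} {U : Set (Equiv.Perm V)}
    (hU : IsOpen U) (h1 : 1 ∈ U) :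
    ∃ I : Finset V, ∀ g : Equiv.Perm V, (∀ i ∈ I, g i = i) → g ∈ U := by
  let _ : TopologicalSpace V := ⊥
  obtain ⟨U', hU', rfl⟩ := isOpen_induced_iff.1 hU
  obtain ⟨I, u, hu, hIu⟩ := isOpen_pi_iff.1 hU' _ h1
  exact ⟨I, fun g hg => hIu fun i hi => show g i ∈ u i by rw [hg i hi]; exact (hu i hi).2⟩

theorem Subgroup.exists_finset_forall_apply_eq_of_continuous {V W : Type*}
    {H : Subgroup (Equiv.Perm V)} {K : Subgroup (Equiv.Perm W)} (e : H →* K) (he : Continuous e)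
    (z : W) : ∃ I : Finset V, ∀ g : H, (∀ i ∈ I, (g : Equiv.Perm V) i = i) →
      (e g : Equiv.Perm W) z = z := by
  obtain ⟨U, hU, hUeq⟩ := isOpen_induced_iff.1
    (((Equiv.Perm.isOpen_setOf_apply_eq z).preimage continuous_subtype_val).preimage he)
  obtain ⟨I, hI⟩ := Equiv.Perm.exists_finset_forall_mem_of_isOpen hU
    (show (1 : H) ∈ Subtype.val ⁻¹' U by rw [hUeq]; simp)
  refine ⟨I, fun g hg => ?_⟩
  have hgU : g ∈ Subtype.val ⁻¹' U := hI g hg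
  rwa [hUeq] at hgU

open Cardinal in
theorem randomLinearOrderAut_not_universal_general
    {L : Type u} [LinearOrder L] (κ : Cardinal.{u})
    (hκ : Cardinal.aleph0 < κ)
    (huniv : ∀ (Y : Type u) [LinearOrder Y], #Y < κ → Nonempty (Y ↪o L))
    (hhom : ∀ A B : Set L, #A < κ → #B < κ → ∀ f : A ≃o B,
      ∃ g : L ≃o L, ∀ a : A, g (a : L) = (f a : L)) :
    ∃ Q : Set L, Nonempty (Q ≃o ℚ) ∧
      ¬ ∃ e : relAut (fun a b : Q => (a : L) < b) →* relAut (fun a b : L => a < b),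
          Function.Injective e ∧ Continuous e := by
  obtain ⟨emb⟩ := huniv (ULift.{u} ℚ) (by simpa using hκ)
  let ι : ℚ ≃o range emb := ULift.orderIso.symm.trans emb.orderIso
  refine ⟨range emb, ⟨ι.symm⟩, ?_⟩
  rintro ⟨e, he_inj, he_cont⟩
  let ρ : (ℚ ≃o ℚ) →* (L ≃o L) := (relAutLtMulEquiv L).toMonoidHom.comp
    (e.comp (ι.autCongr.trans (relAutLtMulEquiv _).symm).toMonoidHom)
  have hρ_inj : Function.Injective ρ :=
    (relAutLtMulEquiv L).injective.comp (he_inj.comp (MulEquiv.injective _))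
  have hρ_supp : ∀ z, ∃ P, IsSupport ρ P z := by
    intro z
    obtain ⟨I, hI⟩ := Subgroup.exists_finset_forall_apply_eq_of_continuous e he_cont z
    refine ⟨I.image ι.symm, fun g hg => hI _ fun i hi => ?_⟩
    change ι (g (ι.symm i)) = i
    rw [hg _ (Finset.mem_image_of_mem _ hi), OrderIso.apply_symm_apply]
  have hρ_one := Rat.orderIsoHom_eq_one_of_isEtaOne
    (isEtaOne_of_universal_of_homogeneous huniv hhom hκ) ρ hρ_supp
  have h1 : OrderIso.addRight (1 : ℚ) = 1 := hρ_inj (by rw [hρ_one, map_one, MonoidHom.one_apply])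
  simpa using DFunLike.congr_fun h1 0

open Cardinal in
/-- Let `κ` be an uncountable cardinal with `κ^{<κ} = κ` and let `L` be a linear order of
cardinality `κ` which is `κ`-universal and `κ`-ultrahomogeneous. Then `Aut(L)` is not
universal: there is a subset `Q ⊆ L` whose induced linear order is order-isomorphic to
`(ℚ, <)` and such that there is no injective continuous group homomorphism from the group
of order automorphisms of `Q` into `Aut(L)` (both with the pointwise convergence
topology). -/
theorem randomLinearOrderAut_not_universal
    {L : Type u} [LinearOrder L] (κ : Cardinal.{u})
    (hκ : Cardinal.aleph0 < κ) (hpow : κ ^< κ = κ)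
    (hcard : #L = κ)
    (huniv : ∀ (Y : Type u) [LinearOrder Y], #Y < κ → Nonempty (Y ↪o L))
    (hhom : ∀ A B : Set L, #A < κ → #B < κ → ∀ f : A ≃o B,
      ∃ g : L ≃o L, ∀ a : A, g (a : L) = (f a : L)) :
    ∃ Q : Set L, Nonempty (Q ≃o ℚ) ∧
      ¬ ∃ e : relAut (fun a b : Q => (a : L) < b) →* relAut (fun a b : L => a < b),
          Function.Injective e ∧ Continuous e :=
  randomLinearOrderAut_not_universal_general κ hκ huniv hhom
end

section
/- Let κ be an uncountable cardinal with κ^{<κ} = κ and let P be a partially ordered set of cardinality κ that is κ-universal (every partial order of cardinality strictly less than κ embeds into P as a suborder) and κ-ultrahomogeneous (every order isomorphism between two subsets of P of cardinality strictly less than κ, each with the induced partial order, extends to an automorphism of P). Then Aut(P) is not universal: there exists a subset A ⊆ P such that there is no injective continuous group homomorphism from the automorphism group of the induced partial order on A into Aut(P). -/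
/-! A countably infinite antichain `A ⊆ P` exists by universality, and every permutation of `A`
is an automorphism, so the disjoint transpositions `τₙ = (a₂ₙ a₂ₙ₊₁)` are nontrivial involutions
of `Aut(A)` with `τₙ → 1`. For an injective continuous homomorphism `e : Aut(A) → Aut(P)`, the
`gₙ = e(τₙ)` are nontrivial involutions of `P`, and by continuity every point of `P` is fixed
by `gₙ` for all large `n`.

Universality together with ultrahomogeneity realises every cut of a countable subset of `P` by a new
point. With such one-point extensions one chooses recursively points `wₙ` and indices `kₙ`
increasing, with `wₘ ≰ g_{kₙ} wₙ` for all `m, n`, and then a point `z` below every `wₙ` but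
below no `g_{kₙ} wₙ`. Then `g_{kₙ} z = z` would give `z ≤ g_{kₙ} wₙ`, so `z` is moved by
infinitely many `gₙ`. -/

universe u

open Cardinal Filter Topology

namespace CutExtension

variable {α : Type*} [PartialOrder α]

def le (L U : Set α) : Option α → Option α → Prop
  | some a, some b => a ≤ b
  | some a, none => a ∈ L
  | none, some b => b ∈ U
  | none, none => True

/-- `Option α` with the new point `none` placed above `L` and below `U`. -/
abbrev partialOrder (L U : Set α) (hL : IsLowerSet L) (hU : IsUpperSet U)
    (hLU : ∀ l ∈ L, ∀ u ∈ U, l < u) : PartialOrder (Option α) where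
  le := le L U
  lt a b := le L U a b ∧ ¬ le L U b a
  le_refl := by rintro (_ | a) <;> simp [le]
  le_trans := by
    rintro (_ | a) (_ | b) (_ | c) hab hbc <;> simp only [le] at hab hbc ⊢ <;>
    first
      | trivial
      | exact hU hbc hab
      | exact (hLU _ hab _ hbc).le
      | exact hL hab hbc
      | exact le_trans hab hbc
  le_antisymm := by
    rintro (_ | a) (_ | b) hab hba <;> simp only [le] at hab hba
    · rfl
    · exact ((hLU _ hba _ hab).ne rfl).elim
    · exact ((hLU _ hab _ hba).ne rfl).elim
    · rw [le_antisymm hab hba]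

end CutExtension

namespace OrderIso

variable {P : Type*} [PartialOrder P] {g : P ≃o P}

theorem not_le_apply_of_mul_self_eq_one (hg : g * g = 1) {a : P} (ha : g a ≠ a) : ¬ a ≤ g a :=
  fun h => ha (le_antisymm (by simpa [← RelIso.mul_apply, hg] using g.monotone h) h)

theorem not_apply_le_of_mul_self_eq_one (hg : g * g = 1) {a : P} (ha : g a ≠ a) :
    ¬ g a ≤ a := by
  have hgg : g (g a) = a := by rw [← RelIso.mul_apply, hg, RelIso.one_apply]
  simpa [hgg] using g.not_le_apply_of_mul_self_eq_one hg (a := g a) (by rwa [hgg, ne_comm])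

end OrderIso

structure IsUniversalUltrahomogeneous (κ : Cardinal.{u}) (P : Type u) [PartialOrder P] : Prop where
  universal : ∀ (Y : Type u) [PartialOrder Y], #Y < κ → Nonempty (Y ↪o P)
  ultrahomogeneous : ∀ A B : Set P, #A < κ → #B < κ → ∀ f : A ≃o B,
    ∃ g : P ≃o P, ∀ a : A, g (a : P) = (f a : P)

namespace IsUniversalUltrahomogeneous

variable {P : Type u} [PartialOrder P] {κ : Cardinal.{u}}

theorem exists_orderEmbedding_extend (hP : IsUniversalUltrahomogeneous κ P) {Y : Type u}
    [PartialOrder Y] (hY : #Y < κ) {X : Set P} (i : X ↪o Y) :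
    ∃ F : Y ↪o P, ∀ x, F (i x) = x := by
  obtain ⟨j⟩ := hP.universal Y hY
  have hX : #X < κ := (mk_le_of_injective i.injective).trans_lt hY
  let φ : X ↪o P := i.trans j
  obtain ⟨g, hg⟩ := hP.ultrahomogeneous (Set.range φ) X
    (by rwa [mk_range_eq φ φ.injective]) hX φ.orderIso.symm
  refine ⟨j.trans g.toOrderEmbedding, fun x => ?_⟩
  have hx := hg (φ.orderIso x)
  rwa [OrderIso.symm_apply_apply] at hx

theorem exists_cut_realization (hP : IsUniversalUltrahomogeneous κ P) (hκ : ℵ₀ < κ)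
    {X : Set P} (hX : #X < κ) (L U : Set X) (hL : IsLowerSet L) (hU : IsUpperSet U)
    (hLU : ∀ l ∈ L, ∀ u ∈ U, l < u) :
    ∃ z : P, ∀ x : X, ((x : P) ≤ z ↔ x ∈ L) ∧ (z ≤ x ↔ x ∈ U) := by
  let := CutExtension.partialOrder L U hL hU hLU
  have hY : #(Option X) < κ := by
    rw [mk_option]
    exact add_lt_of_lt hκ.le hX (one_lt_aleph0.trans hκ)
  obtain ⟨F, hF⟩ := hP.exists_orderEmbedding_extend hY
    (OrderEmbedding.ofMapLEIff some fun _ _ => Iff.rfl)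
  refine ⟨F none, fun x => ?_⟩
  rw [← hF x, F.le_iff_le, F.le_iff_le]
  exact ⟨Iff.rfl, Iff.rfl⟩

theorem exists_infinite_antichain (hP : IsUniversalUltrahomogeneous κ P) (hκ : ℵ₀ < κ) :
    ∃ A : Set P, A.Infinite ∧ IsAntichain (· ≤ ·) A := by
  let : PartialOrder (ULift.{u} ℕ) :=
    { le := Eq
      lt := fun _ _ => False
      le_refl := fun _ => rfl
      le_trans := fun _ _ _ => Eq.trans
      le_antisymm := fun _ _ h _ => h
      lt_iff_le_not_ge := fun _ _ => ⟨False.elim, fun ⟨h, h'⟩ => h' h.symm⟩ }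
  obtain ⟨j⟩ := hP.universal (ULift ℕ) (by simpa using hκ)
  refine ⟨Set.range j, Set.infinite_range_of_injective j.injective, ?_⟩
  rintro _ ⟨m, rfl⟩ _ ⟨n, rfl⟩ hne hle
  exact hne (congrArg j (j.map_rel_iff.1 hle))

variable {g : P ≃o P}

theorem exists_apply_ne_forall_not_le (hP : IsUniversalUltrahomogeneous κ P) (hκ : ℵ₀ < κ)
    (hg : g * g = 1) (hg1 : g ≠ 1) {V : Set P} (hV : V.Finite) :
    ∃ z, g z ≠ z ∧ ∀ v ∈ V, ¬ z ≤ v := by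
  obtain ⟨a, ha⟩ : ∃ a, g a ≠ a := by simpa [DFunLike.ext_iff] using hg1
  have hX : (insert a (insert (g a) V)).Finite := (hV.insert _).insert _
  obtain ⟨z, hz⟩ := hP.exists_cut_realization hκ (hX.countable.le_aleph0.trans_lt hκ)
    {x | (x : P) ≤ a} ∅ (fun _ _ hxy hy => le_trans hxy hy) isUpperSet_empty (by simp)
  have haz : a ≤ z := ((hz ⟨a, by simp⟩).1).2 le_rfl
  refine ⟨z, fun hgz => ?_, fun v hv => ((hz ⟨v, by simp [hv]⟩).2).1⟩
  have hgaz : g a ≤ z := hgz ▸ g.monotone haz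
  exact g.not_apply_le_of_mul_self_eq_one hg ha ((hz ⟨g a, by simp⟩).1.1 hgaz)

theorem exists_not_le_apply_not_ge_not_le (hP : IsUniversalUltrahomogeneous κ P) (hκ : ℵ₀ < κ)
    (hg : g * g = 1) (hg1 : g ≠ 1) {U V : Set P} (hU : U.Finite) (hV : V.Finite) :
    ∃ w, ¬ w ≤ g w ∧ (∀ u ∈ U, ¬ u ≤ w) ∧ ∀ v ∈ V, ¬ w ≤ v := by
  obtain ⟨z, hgz, hzV⟩ := hP.exists_apply_ne_forall_not_le hκ hg hg1 hV
  have hX : (insert z (insert (g z) (U ∪ V))).Finite := ((hU.union hV).insert _).insert _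
  obtain ⟨w, hw⟩ := hP.exists_cut_realization hκ (hX.countable.le_aleph0.trans_lt hκ)
    ∅ {x | z ≤ x} isLowerSet_empty (fun _ _ hxy hx => le_trans hx hxy) (by simp)
  have hwz : w ≤ z := ((hw ⟨z, by simp⟩).2).2 le_rfl
  have hwgz : ¬ w ≤ g z := fun h =>
    g.not_le_apply_of_mul_self_eq_one hg hgz ((hw ⟨g z, by simp⟩).2.1 h)
  refine ⟨w, g.not_le_apply_of_mul_self_eq_one hg fun hgw => hwgz ?_,
    fun u hu => (hw ⟨u, by simp [hu]⟩).1.1, fun v hv h => hzV v hv ?_⟩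
  · exact hgw ▸ g.monotone hwz
  · exact (hw ⟨v, by simp [hv]⟩).2.1 h

theorem exists_seq_not_le_apply (hP : IsUniversalUltrahomogeneous κ P) (hκ : ℵ₀ < κ)
    (g : ℕ → P ≃o P) (hg : ∀ n, g n * g n = 1) (hg1 : ∀ n, g n ≠ 1) :
    ∃ (k : ℕ → ℕ) (w : ℕ → P), StrictMono k ∧ ∀ m n, ¬ w m ≤ g (k n) (w n) := by
  -- A pair `(k, w)` attaches the point `w` to the involution `g k`.
  obtain ⟨f, hQ, hr⟩ := exists_seq_of_forall_finset_exists (α := ℕ × P)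
    (fun p => ¬ p.2 ≤ g p.1 p.2)
    (fun p q => p.1 < q.1 ∧ ¬ p.2 ≤ g q.1 q.2 ∧ ¬ q.2 ≤ g p.1 p.2) fun s _ => by
      set k := s.sup Prod.fst + 1
      obtain ⟨w, hw, hU, hV⟩ := hP.exists_not_le_apply_not_ge_not_le hκ (hg k) (hg1 k)
        (s.finite_toSet.image fun p => g k p.2) (s.finite_toSet.image fun p => g p.1 p.2)
      refine ⟨(k, w), hw, fun p hp =>
        ⟨Nat.lt_succ_of_le (Finset.le_sup hp), fun h => hU _ ⟨p, hp, rfl⟩ ?_, hV _ ⟨p, hp, rfl⟩⟩⟩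
      simpa [← RelIso.mul_apply, hg] using (g k).monotone h
  refine ⟨fun n => (f n).1, fun n => (f n).2, fun m n h => (hr m n h).1, fun m n => ?_⟩
  rcases lt_trichotomy m n with h | rfl | h
  · exact (hr m n h).2.1
  · exact hQ m
  · exact (hr n m h).2.2

theorem exists_frequently_apply_ne (hP : IsUniversalUltrahomogeneous κ P) (hκ : ℵ₀ < κ)
    (g : ℕ → P ≃o P) (hg : ∀ n, g n * g n = 1) (hg1 : ∀ n, g n ≠ 1) :
    ∃ z, ∃ᶠ n in atTop, g n z ≠ z := by
  obtain ⟨k, w, hk, hw⟩ := hP.exists_seq_not_le_apply hκ g hg hg1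
  have hX : (Set.range w ∪ Set.range fun n => g (k n) (w n)).Countable :=
    (Set.countable_range _).union (Set.countable_range _)
  obtain ⟨z, hz⟩ := hP.exists_cut_realization hκ (hX.le_aleph0.trans_lt hκ) ∅
    {x | ∃ m, w m ≤ x} isLowerSet_empty (fun _ _ hxy ⟨m, hm⟩ => ⟨m, hm.trans hxy⟩) (by simp)
  have hzw : ∀ n, z ≤ w n := fun n => (hz ⟨w n, .inl ⟨n, rfl⟩⟩).2.2 ⟨n, le_rfl⟩
  have hzgw : ∀ n, ¬ z ≤ g (k n) (w n) := fun n h =>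
    (hz ⟨_, .inr ⟨n, rfl⟩⟩).2.1 h |>.elim fun m hm => hw m n hm
  refine ⟨z, frequently_atTop.2 fun N => ⟨k N, hk.id_le N, fun hfix => hzgw N ?_⟩⟩
  exact hfix ▸ (g (k N)).monotone (hzw N)

end IsUniversalUltrahomogeneous

theorem exists_finset_forall_fixed_of_continuous {V W : Type*} {r : V → V → Prop}
    {s : W → W → Prop} {e : relAut r →* relAut s} (he : Continuous e) (z : W) :
    ∃ F : Finset V, ∀ t : relAut r,
      (∀ a ∈ F, (t : Equiv.Perm V) a = a) → (e t : Equiv.Perm W) z = z := by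
  let : TopologicalSpace V := ⊥
  let : TopologicalSpace W := ⊥
  have : DiscreteTopology W := ⟨rfl⟩
  have hcont : Continuous fun t : relAut s => (t : Equiv.Perm W) z :=
    (continuous_apply z).comp (continuous_induced_dom.comp continuous_subtype_val)
  have hopen : IsOpen {t : relAut s | (t : Equiv.Perm W) z = z} :=
    hcont.isOpen_preimage {z} (isOpen_discrete _)
  have hmem : e ⁻¹' {t | (t : Equiv.Perm W) z = z} ∈ 𝓝 1 :=
    (hopen.preimage he).mem_nhds (by simp)
  rw [nhds_subtype, nhds_induced, nhds_pi] at hmem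
  obtain ⟨_, ⟨_, hpi, hsub₂⟩, hsub₁⟩ := hmem
  obtain ⟨F, T, hT, hFT⟩ := mem_pi'.1 hpi
  refine ⟨F, fun t ht => hsub₁ (hsub₂ (hFT fun a ha => ?_))⟩
  change (t : Equiv.Perm V) a ∈ T a
  rw [ht a ha]
  exact mem_of_mem_nhds (hT a)

theorem relAut_eq_top_of_forall_iff_eq {V : Type*} {r : V → V → Prop}
    (hr : ∀ a b, r a b ↔ a = b) : relAut r = ⊤ :=
  eq_top_iff.2 fun σ _ x y => by simp [hr]

def relAutLEMulEquiv (P : Type*) [PartialOrder P] : relAut (fun a b : P => a ≤ b) ≃* (P ≃o P) where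
  toFun g := ⟨g.1, g.2 _ _⟩
  invFun f := ⟨f.toEquiv, fun _ _ => f.le_iff_le⟩
  left_inv _ := rfl
  right_inv _ := rfl
  map_mul' _ _ := rfl

theorem eventually_swap_apply_eq {V : Type*} [DecidableEq V] {a : ℕ → V}
    (ha : Function.Injective a) (F : Finset V) :
    ∀ᶠ n in atTop, ∀ b ∈ F, Equiv.swap (a (2 * n)) (a (2 * n + 1)) b = b := by
  have h : ∀ᶠ m in atTop, a m ∉ F := by
    rw [← Nat.cofinite_eq_atTop]
    exact (F.finite_toSet.preimage ha.injOn).eventually_cofinite_notMem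
  obtain ⟨M, hM⟩ := eventually_atTop.1 h
  refine eventually_atTop.2 ⟨M, fun n hn b hb => Equiv.swap_apply_of_ne_of_ne ?_ ?_⟩
  · rintro rfl
    exact hM _ (by omega) hb
  · rintro rfl
    exact hM _ (by omega) hb

open Cardinal in
theorem randomPartialOrderAut_not_universal_general
    {P : Type u} [PartialOrder P] (κ : Cardinal.{u})
    (hκ : Cardinal.aleph0 < κ)
    (huniv : ∀ (Y : Type u) [PartialOrder Y], #Y < κ → Nonempty (Y ↪o P))
    (hhom : ∀ A B : Set P, #A < κ → #B < κ → ∀ f : A ≃o B,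
      ∃ g : P ≃o P, ∀ a : A, g (a : P) = (f a : P)) :
    ∃ A : Set P,
      ¬ ∃ e : relAut (fun a b : A => (a : P) ≤ b) →* relAut (fun a b : P => a ≤ b),
          Function.Injective e ∧ Continuous e := by
  classical
  have hP : IsUniversalUltrahomogeneous κ P := ⟨huniv, hhom⟩
  obtain ⟨A, hA_inf, hA_anti⟩ := hP.exists_infinite_antichain hκ
  refine ⟨A, fun ⟨e, he_inj, he_cont⟩ => ?_⟩
  have htop : relAut (fun a b : A => (a : P) ≤ b) = ⊤ := relAut_eq_top_of_forall_iff_eq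
    fun a b => ⟨fun h => Subtype.ext (hA_anti.eq a.2 b.2 h), fun h => h ▸ le_rfl⟩
  let x := hA_inf.natEmbedding
  let τ : ℕ → relAut (fun a b : A => (a : P) ≤ b) := fun n =>
    ⟨Equiv.swap (x (2 * n)) (x (2 * n + 1)), htop ▸ Subgroup.mem_top _⟩
  have hτ_sq : ∀ n, τ n * τ n = 1 := fun n => Subtype.ext (Equiv.swap_mul_self _ _)
  have hτ_ne : ∀ n, τ n ≠ 1 := fun n h => by
    have := x.injective (Equiv.swap_eq_one_iff.1 (congrArg Subtype.val h))
    omega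
  let G := (relAutLEMulEquiv P).toMonoidHom.comp e
  have hG : Function.Injective G := (relAutLEMulEquiv P).injective.comp he_inj
  obtain ⟨z, hz⟩ := hP.exists_frequently_apply_ne hκ (fun n => G (τ n))
    (fun n => by rw [← map_mul, hτ_sq, map_one]) fun n => (map_ne_one_iff G hG).2 (hτ_ne n)
  obtain ⟨F, hF⟩ := exists_finset_forall_fixed_of_continuous he_cont z
  obtain ⟨n, hmoved, hfixed⟩ := (hz.and_eventually
    ((eventually_swap_apply_eq x.injective F).mono fun n hn => hF (τ n) hn)).exists
  exact hmoved hfixed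

open Cardinal in
/-- Let `κ` be an uncountable cardinal with `κ^{<κ} = κ` and let `P` be a partial order of
cardinality `κ` which is `κ`-universal (every partial order of cardinality `< κ` embeds into
`P` as a suborder) and `κ`-ultrahomogeneous (every order isomorphism between two subsets of
cardinality `< κ`, with the induced partial orders, extends to an automorphism of `P`).
Then `Aut(P)` is not universal: there is a subset `A ⊆ P` such that there is no injective
continuous group homomorphism from the automorphism group of the induced partial order on
`A` into `Aut(P)` (both with the pointwise convergence topology). -/
theorem randomPartialOrderAut_not_universal
    {P : Type u} [PartialOrder P] (κ : Cardinal.{u})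
    (hκ : Cardinal.aleph0 < κ) (hpow : κ ^< κ = κ)
    (hcard : #P = κ)
    (huniv : ∀ (Y : Type u) [PartialOrder Y], #Y < κ → Nonempty (Y ↪o P))
    (hhom : ∀ A B : Set P, #A < κ → #B < κ → ∀ f : A ≃o B,
      ∃ g : P ≃o P, ∀ a : A, g (a : P) = (f a : P)) :
    ∃ A : Set P,
      ¬ ∃ e : relAut (fun a b : A => (a : P) ≤ b) →* relAut (fun a b : P => a ≤ b),
          Function.Injective e ∧ Continuous e :=
  randomPartialOrderAut_not_universal_general κ hκ huniv hhom
end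

section
/- Let κ be an uncountable cardinal with κ^{<κ} = κ and let G be a group of cardinality κ such that every group of cardinality at most κ is isomorphic to a subgroup of G, and every isomorphism between two subgroups of G each generated by strictly fewer than κ elements extends to an automorphism of G. Then there is no injective continuous group homomorphism from S_∞ into the automorphism group Aut(G) of the group G. -/
/-- The topology of pointwise convergence on the automorphism group of a group `G`
(regarded as a discrete set): the topology induced from the product topology on `G → G`
where `G` carries the discrete topology. -/
instance mulAutPointwiseTopology (G : Type*) [Group G] : TopologicalSpace (MulAut G) :=
  TopologicalSpace.induced (fun g : MulAut G => (g : G → G))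
    (@Pi.topologicalSpace G (fun _ => G) (fun _ => ⊥))

/-!
By continuity, each `x : G` is fixed by `e σ` as soon as `σ` fixes some finite subset of `ℕ`
pointwise, hence so is every finitely generated subgroup of `G`. By injectivity, for every finite
`F ⊆ ℕ` some `e σ` with `σ` fixing `F` moves an element `w F`; the countable set of these witnesses
therefore lies in no finitely generated subgroup. On the other hand every countable group `H`
embeds into a finitely generated countable group (a three-generated subgroup of the wreath product
`H ≀ Sym(ℤ × ℤ)`), so by universality and homogeneity of `G` every countable subset of `G` does lie
in a finitely generated subgroup.
-/

open MulAction SemidirectProduct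
open scoped commutatorElement

universe u

section PointwiseConvergence

variable {V G : Type*} [Group G]

theorem MulAut.isOpen_setOf_apply_eq (x y : G) : IsOpen {φ : MulAut G | φ x = y} := by
  let _ : TopologicalSpace G := ⊥
  have : DiscreteTopology G := ⟨rfl⟩
  have hx : Continuous fun φ : MulAut G => φ x := (continuous_apply x).comp continuous_induced_dom
  exact (isOpen_discrete {y}).preimage hx

theorem Equiv.Perm.exists_fixingSubgroup_subset_of_isOpen {U : Set (Equiv.Perm V)}
    (hU : IsOpen U) (h1 : 1 ∈ U) :
    ∃ F : Finset V, (fixingSubgroup (Equiv.Perm V) (F : Set V) : Set (Equiv.Perm V)) ⊆ U := by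
  let _ : TopologicalSpace V := ⊥
  obtain ⟨W, hW, rfl⟩ := isOpen_induced_iff.mp hU
  obtain ⟨F, u, hu, hFu⟩ := isOpen_pi_iff.mp hW _ h1
  refine ⟨F, fun σ hσ => hFu fun i hi => ?_⟩
  have hσi : σ i = i := (mem_fixingSubgroup_iff _).mp hσ i hi
  change σ i ∈ u i
  rw [hσi]
  exact (hu i hi).2

variable {e : Equiv.Perm V →* MulAut G}

theorem exists_fixingSubgroup_forall_mem_closure_apply_eq (he : Continuous e) (T : Finset G) :
    ∃ F : Finset V, ∀ σ ∈ fixingSubgroup (Equiv.Perm V) (F : Set V),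
      ∀ x ∈ Subgroup.closure (T : Set G), e σ x = x := by
  have hsupp (x : G) : ∃ F : Finset V,
      (fixingSubgroup (Equiv.Perm V) (F : Set V) : Set (Equiv.Perm V)) ⊆ {σ | e σ x = x} :=
    Equiv.Perm.exists_fixingSubgroup_subset_of_isOpen
      ((MulAut.isOpen_setOf_apply_eq x x).preimage he) (by simp)
  choose F hF using hsupp
  classical
  refine ⟨T.biUnion F, fun σ hσ => MonoidHom.eqOn_closure (f := (e σ).toMonoidHom)
    (g := MonoidHom.id G) fun x hx => hF x ?_⟩
  exact fixingSubgroup_antitone _ _ (Finset.coe_subset.mpr (Finset.subset_biUnion_of_mem F hx)) hσ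

theorem Equiv.Perm.exists_ne_one_mem_fixingSubgroup [Infinite V] (F : Finset V) :
    ∃ σ ∈ fixingSubgroup (Equiv.Perm V) (F : Set V), σ ≠ 1 := by
  classical
  obtain ⟨a, ha⟩ := Infinite.exists_notMem_finset F
  obtain ⟨b, hb⟩ := Infinite.exists_notMem_finset (insert a F)
  obtain ⟨hba, hbF⟩ : b ≠ a ∧ b ∉ F := by simpa [not_or] using hb
  refine ⟨Equiv.swap a b, (mem_fixingSubgroup_iff _).mpr fun x hx => ?_, ?_⟩
  · exact Equiv.swap_apply_of_ne_of_ne (ne_of_mem_of_not_mem hx ha) (ne_of_mem_of_not_mem hx hbF)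
  · simpa using hba.symm

theorem exists_countable_forall_not_subset_closure_finset [Countable V] [Infinite V]
    (he : Continuous e) (he_inj : Function.Injective e) :
    ∃ X : Set G, X.Countable ∧ ∀ T : Finset G, ¬ X ⊆ Subgroup.closure (T : Set G) := by
  have hmoved (F : Finset V) : ∃ w : G, ∃ σ ∈ fixingSubgroup (Equiv.Perm V) (F : Set V),
      e σ w ≠ w := by
    obtain ⟨σ, hσF, hσ⟩ := Equiv.Perm.exists_ne_one_mem_fixingSubgroup F
    have : e σ ≠ 1 := fun h => hσ (he_inj (h.trans (map_one e).symm))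
    obtain ⟨w, hw⟩ := DFunLike.ne_iff.mp this
    exact ⟨w, σ, hσF, hw⟩
  choose w σ hσF hσ using hmoved
  refine ⟨Set.range w, Set.countable_range w, fun T hT => ?_⟩
  obtain ⟨F, hF⟩ := exists_fixingSubgroup_forall_mem_closure_apply_eq he T
  exact hσ F (hF _ (hσF F) _ (hT ⟨F, rfl⟩))

end PointwiseConvergence

theorem Subgroup.countable_closure {G : Type*} [Group G] {S : Set G} (hS : S.Countable) :
    Countable (Subgroup.closure S) := by
  have := hS.to_subtype
  rw [FreeGroup.closure_eq_range]
  exact (FreeGroup.lift Subtype.val).rangeRestrict_surjective.countable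

section Wreath

variable {Ω H : Type*} [Group H]

/-- The unrestricted permutational wreath product `H ≀ Sym(Ω)`; the domain action is on the
right, `(π • d) ω = d (π ω)`. -/
abbrev PermWreath (Ω H : Type*) [Group H] :=
  (Ω → H) ⋊[MulDistribMulAction.toMulAut (Equiv.Perm Ω)ᵈᵐᵃ (Ω → H)] (Equiv.Perm Ω)ᵈᵐᵃ

theorem PermWreath.inr_mul_inl_mul_inr_inv (π : Equiv.Perm Ω) (d : Ω → H) :
    (inr (DomMulAct.mk π) * inl d * (inr (DomMulAct.mk π))⁻¹ : PermWreath Ω H) = inl (d ∘ π) := by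
  rw [← map_inv, ← inl_aut]
  rfl

theorem PermWreath.commutatorElement_inr_inl (π : Equiv.Perm Ω) (d : Ω → H) :
    ⁅(inr (DomMulAct.mk π) : PermWreath Ω H), (inl d : PermWreath Ω H)⁆ = inl (d ∘ π * d⁻¹) := by
  rw [commutatorElement_def, inr_mul_inl_mul_inr_inv, ← map_inv (inl : (Ω → H) →* _), ← map_mul]

end Wreath

def columnShift : Equiv.Perm (ℤ × ℤ) := Equiv.addRight (1, 0)

def zeroColumnShift : Equiv.Perm (ℤ × ℤ) :=
  Equiv.prodShear (Equiv.refl ℤ) fun k => Equiv.addRight (if k = 0 then 1 else 0)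

def upperFill {H : Type*} [One H] (c : ℤ → H) : ℤ × ℤ → H := fun p => if 0 < p.2 then c p.1 else 1

theorem columnShift_zpow_apply (n : ℤ) (p : ℤ × ℤ) : (columnShift ^ n) p = (p.1 + n, p.2) := by
  simp [columnShift, Equiv.zsmul_addRight, Prod.ext_iff]

theorem upperFill_comp_columnShift_zpow {H : Type*} [One H] (c : ℤ → H) (n : ℤ) :
    upperFill c ∘ ⇑(columnShift ^ n) = upperFill (fun k => c (k + n)) := by
  funext p
  simp [upperFill, columnShift_zpow_apply]

theorem upperFill_comp_zeroColumnShift_mul_inv {H : Type*} [Group H] (c : ℤ → H) :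
    upperFill c ∘ zeroColumnShift * (upperFill c)⁻¹ = Pi.mulSingle (0, 0) (c 0) := by
  funext ⟨k, m⟩
  by_cases hk : k = 0
  · subst hk
    rcases lt_trichotomy m 0 with hm | rfl | hm
    · simp [upperFill, zeroColumnShift, hm.ne, show ¬ 0 < m + 1 by omega, hm.not_gt]
    · simp [upperFill, zeroColumnShift]
    · simp [upperFill, zeroColumnShift, hm.ne', hm, show 0 < m + 1 by omega]
  · simp [upperFill, zeroColumnShift, hk]

/-- Conjugating by `columnShift ^ n` brings `c n` to column `0`; the commutator with
`zeroColumnShift` then cancels everything except the bottom cell `(0, 0)` of that column. -/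
theorem PermWreath.inl_mulSingle_mem_closure {H : Type*} [Group H] (c : ℤ → H) (n : ℤ) :
    (inl (Pi.mulSingle (0, 0) (c n)) : PermWreath (ℤ × ℤ) H) ∈ Subgroup.closure
      {inr (DomMulAct.mk columnShift), inr (DomMulAct.mk zeroColumnShift), inl (upperFill c)} := by
  set K := Subgroup.closure ({inr (DomMulAct.mk columnShift), inr (DomMulAct.mk zeroColumnShift),
    inl (upperFill c)} : Set (PermWreath (ℤ × ℤ) H))
  have hshift : inr (DomMulAct.mk (columnShift ^ n)) ∈ K := by
    rw [DomMulAct.mk_zpow, map_zpow]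
    exact zpow_mem (Subgroup.subset_closure (by simp)) n
  have hzero : inr (DomMulAct.mk zeroColumnShift) ∈ K := Subgroup.subset_closure (by simp)
  have hfill : inl (upperFill fun k => c (k + n)) ∈ K := by
    rw [← upperFill_comp_columnShift_zpow, ← inr_mul_inl_mul_inr_inv]
    exact mul_mem (mul_mem hshift (Subgroup.subset_closure (by simp))) (inv_mem hshift)
  have hcomm := upperFill_comp_zeroColumnShift_mul_inv fun k => c (k + n)
  simp only [zero_add] at hcomm
  rw [← hcomm, ← commutatorElement_inr_inl, commutatorElement_def]
  exact mul_mem (mul_mem (mul_mem hzero hfill) (inv_mem hzero)) (inv_mem hfill)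

theorem exists_injective_monoidHom_countable_fg (H : Type u) [Group H] [Countable H] :
    ∃ (B : Type u) (_ : Group B), Countable B ∧ Group.FG B ∧
      ∃ j : H →* B, Function.Injective j := by
  obtain ⟨c, hc⟩ : ∃ c : ℤ → H, Function.Surjective c := by
    obtain ⟨c, hc⟩ := exists_surjective_nat H
    refine ⟨fun k => c k.toNat, fun h => ?_⟩
    obtain ⟨n, rfl⟩ := hc h
    exact ⟨n, by simp⟩
  set S : Set (PermWreath (ℤ × ℤ) H) :=
    {inr (DomMulAct.mk columnShift), inr (DomMulAct.mk zeroColumnShift), inl (upperFill c)}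
  have hS : S.Finite := by simp [S]
  let ι : H →* PermWreath (ℤ × ℤ) H := inl.comp (MonoidHom.mulSingle (fun _ : ℤ × ℤ => H) (0, 0))
  have hι : Function.Injective ι :=
    inl_injective.comp (Pi.mulSingle_injective (M := fun _ : ℤ × ℤ => H) _)
  let j : H →* Subgroup.closure S := ι.codRestrict _ fun h => by
    obtain ⟨n, rfl⟩ := hc h
    exact PermWreath.inl_mulSingle_mem_closure c n
  refine ⟨Subgroup.closure S, inferInstance, Subgroup.countable_closure hS.countable,
    (Group.fg_iff_subgroup_fg _).2 ((Subgroup.fg_iff _).2 ⟨S, rfl, hS⟩), j, ?_⟩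
  exact (MonoidHom.injective_codRestrict _ _ _).2 hι

theorem exists_finset_subset_closure_of_countable {G : Type u} [Group G]
    (huniv : ∀ (H : Type u) [Group H] [Countable H], ∃ K : Subgroup G, Nonempty (H ≃* K))
    (hhom : ∀ A B : Subgroup G, Countable A → Countable B →
      ∀ f : A ≃* B, ∃ g : MulAut G, ∀ a : A, g (a : G) = (f a : G))
    {X : Set G} (hX : X.Countable) : ∃ T : Finset G, X ⊆ Subgroup.closure (T : Set G) := by
  have := Subgroup.countable_closure hX
  obtain ⟨B, _, _, hB, j, hj⟩ := exists_injective_monoidHom_countable_fg (Subgroup.closure X)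
  obtain ⟨K, ⟨ψ⟩⟩ := huniv B
  set Φ : B →* G := K.subtype.comp ψ.toMonoidHom
  have hχ : Function.Injective (Φ.comp j) :=
    (K.subtype_injective.comp ψ.injective).comp hj
  have : Countable (Φ.comp j).range := (Φ.comp j).rangeRestrict_surjective.countable
  obtain ⟨g, hg⟩ := hhom _ _ inferInstance inferInstance (MonoidHom.ofInjective hχ)
  obtain ⟨T, hT⟩ := Group.fg_def.mp hB
  classical
  refine ⟨T.image (g.symm.toMonoidHom.comp Φ), fun x hx => ?_⟩
  have hgx : g.symm (Φ (j ⟨x, Subgroup.subset_closure hx⟩)) = x := by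
    rw [MulEquiv.symm_apply_eq]
    exact ((hg ⟨x, _⟩).trans (MonoidHom.ofInjective_apply hχ)).symm
  rw [← hgx, Finset.coe_image, ← MonoidHom.map_closure]
  exact Subgroup.mem_map_of_mem _ (hT ▸ Subgroup.mem_top _)

open Cardinal in
theorem no_continuous_embedding_of_Sinfty_into_randomGroupAut_general
    {G : Type u} [Group G] (κ : Cardinal.{u})
    (hκ : Cardinal.aleph0 < κ)
    (huniv : ∀ (H : Type u) [Group H], #H ≤ κ →
      ∃ K : Subgroup G, Nonempty (H ≃* K))
    (hhom : ∀ A B : Subgroup G,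
      (∃ S : Set G, #S < κ ∧ Subgroup.closure S = A) →
      (∃ S : Set G, #S < κ ∧ Subgroup.closure S = B) →
      ∀ f : A ≃* B, ∃ g : MulAut G, ∀ a : A, g (a : G) = (f a : G)) :
    ¬ ∃ e : Equiv.Perm ℕ →* MulAut G,
        Function.Injective e ∧ Continuous e := by
  rintro ⟨e, he_inj, he⟩
  have hgen (A : Subgroup G) (_ : Countable A) : ∃ S : Set G, #S < κ ∧ Subgroup.closure S = A :=
    ⟨A, mk_le_aleph0.trans_lt hκ, A.closure_eq⟩
  obtain ⟨X, hX, hXT⟩ := exists_countable_forall_not_subset_closure_finset he he_inj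
  obtain ⟨T, hT⟩ := exists_finset_subset_closure_of_countable
    (fun H _ _ => huniv H (mk_le_aleph0.trans hκ.le))
    (fun A B hA hB => hhom A B (hgen A hA) (hgen B hB)) hX
  exact hXT T hT

open Cardinal in
/-- Let `κ` be an uncountable cardinal with `κ^{<κ} = κ` and let `G` be a group of
cardinality `κ` such that every group of cardinality at most `κ` is isomorphic to a
subgroup of `G` and every isomorphism between two subgroups of `G`, each generated by
strictly fewer than `κ` elements, extends to an automorphism of `G`. Then there is no
injective continuous group homomorphism from `S_∞ = Equiv.Perm ℕ` (with the pointwise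
convergence topology) into `Aut(G)` (with the pointwise convergence topology). -/
theorem no_continuous_embedding_of_Sinfty_into_randomGroupAut
    {G : Type u} [Group G] (κ : Cardinal.{u})
    (hκ : Cardinal.aleph0 < κ) (hpow : κ ^< κ = κ)
    (hcard : #G = κ)
    (huniv : ∀ (H : Type u) [Group H], #H ≤ κ →
      ∃ K : Subgroup G, Nonempty (H ≃* K))
    (hhom : ∀ A B : Subgroup G,
      (∃ S : Set G, #S < κ ∧ Subgroup.closure S = A) →
      (∃ S : Set G, #S < κ ∧ Subgroup.closure S = B) →
      ∀ f : A ≃* B, ∃ g : MulAut G, ∀ a : A, g (a : G) = (f a : G)) :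
    ¬ ∃ e : Equiv.Perm ℕ →* MulAut G,
        Function.Injective e ∧ Continuous e :=
  no_continuous_embedding_of_Sinfty_into_randomGroupAut_general κ hκ huniv hhom
end

section
/- Let U be a metric space such that every Katětov function defined on a countable subset of U is realized in U, i.e., for every countable S ⊆ U and every Katětov function f : S → ℝ there exists z ∈ U with d(z,s) = f(s) for all s ∈ S. Then there is no injective continuous group homomorphism from S_∞ into the isometry group Iso(U) of U equipped with the topology of pointwise convergence. In particular, for an uncountable cardinal κ with κ^{<κ} = κ, S_∞ does not continuously embed into the isometry group of the generalized Urysohn space 𝕌_κ. -/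
/-- The topology of pointwise convergence on the isometry group of a metric space `U`:
the topology induced from the product topology on `U → U`, where `U` carries its metric
topology. -/
instance isometryGroupPointwiseTopology (U : Type*) [MetricSpace U] :
    TopologicalSpace (U ≃ᵢ U) :=
  TopologicalSpace.induced (fun g : U ≃ᵢ U => (g : U → U)) Pi.topologicalSpace

/-- A Katětov function on a subset `S` of a metric space `U`: a nonnegative function
`f : S → ℝ` such that `|f x − f y| ≤ d(x, y) ≤ f x + f y` for all `x, y ∈ S`. -/
def IsKatetov {U : Type*} [MetricSpace U] {S : Set U} (f : S → ℝ) : Prop :=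
  (∀ x : S, 0 ≤ f x) ∧
    ∀ x y : S, |f x - f y| ≤ dist (x : U) (y : U) ∧ dist (x : U) (y : U) ≤ f x + f y

section aux
variable {U : Type*} [MetricSpace U]

private lemma aux_nonempty
    (hreal : ∀ S : Set U, S.Countable → ∀ f : S → ℝ, IsKatetov f →
      ∃ z : U, ∀ s : S, dist z (s : U) = f s) : Nonempty U := by
  obtain ⟨z, -⟩ := hreal ∅ Set.countable_empty (fun _ => 0)
    ⟨fun x => le_refl 0, fun x => absurd x.2 (Set.notMem_empty _)⟩
  exact ⟨z⟩

private lemma aux_cone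
    (hreal : ∀ S : Set U, S.Countable → ∀ f : S → ℝ, IsKatetov f →
      ∃ z : U, ∀ s : S, dist z (s : U) = f s)
    (S : Set U) (hS : S.Countable) (p : U) (C : ℝ) (hC : 0 ≤ C) :
    ∃ z : U, ∀ s ∈ S, dist z s = dist s p + C := by
  have hk : IsKatetov (fun s : S => dist (s : U) p + C) := by
    constructor
    · intro x; positivity
    · intro x y
      constructor
      · simpa using abs_dist_sub_le (x : U) (y : U) p
      · have h1 := dist_triangle (x : U) p (y : U)
        have h2 := dist_comm p (y : U)
        simp only []
        nlinarith [dist_nonneg (α := U) (x := (x:U)) (y := p), hC]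
  obtain ⟨z, hz⟩ := hreal S hS _ hk
  exact ⟨z, fun s hs => hz ⟨s, hs⟩⟩

private lemma aux_midpoint
    (hreal : ∀ S : Set U, S.Countable → ∀ f : S → ℝ, IsKatetov f →
      ∃ z : U, ∀ s : S, dist z (s : U) = f s)
    (u v : U) :
    ∃ m : U, dist m u = dist u v / 2 ∧ dist m v = dist u v / 2 := by
  have hk : IsKatetov (fun _ : ({u, v} : Set U) => dist u v / 2) := by
    constructor
    · intro x; positivity
    · intro x y
      have hx := x.2
      have hy := y.2
      simp only [Set.mem_insert_iff, Set.mem_singleton_iff] at hx hy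
      constructor
      · simpa using dist_nonneg
      · rcases hx with hx | hx <;> rcases hy with hy | hy <;>
          rw [hx, hy] <;> simp [dist_comm] <;> linarith [dist_nonneg (x := u) (y := v)]
  obtain ⟨z, hz⟩ := hreal {u, v} (((Set.finite_singleton v).insert u).countable) _ hk
  exact ⟨z, hz ⟨u, by simp⟩, hz ⟨v, by simp⟩⟩

private lemma aux_window
    (hreal : ∀ S : Set U, S.Countable → ∀ f : S → ℝ, IsKatetov f →
      ∃ z : U, ∀ s : S, dist z (s : U) = f s)
    (G : U ≃ᵢ U) (a b : U) (w₁ w₂ : ℝ) (hw1 : 0 < w₁) (hw12 : w₁ < w₂)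
    (ha : dist (G a) a < w₁) (hb : w₂ < dist (G b) b) :
    ∃ p : U, w₁ ≤ dist (G p) p ∧ dist (G p) p ≤ w₂ := by
  classical
  by_contra hno
  push_neg at hno
  have hlip : ∀ p q : U, dist (G p) p ≤ dist (G q) q + 2 * dist p q := by
    intro p q
    calc dist (G p) p ≤ dist (G p) (G q) + dist (G q) q + dist q p := dist_triangle4 _ _ _ _
    _ = dist (G q) q + 2 * dist p q := by
        rw [G.dist_eq, dist_comm q p]; ring
  set mid : U → U → U := fun u v => Classical.choose (aux_midpoint hreal u v) with hmid
  have hmid1 : ∀ u v, dist (mid u v) u = dist u v / 2 :=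
    fun u v => (Classical.choose_spec (aux_midpoint hreal u v)).1
  have hmid2 : ∀ u v, dist (mid u v) v = dist u v / 2 :=
    fun u v => (Classical.choose_spec (aux_midpoint hreal u v)).2
  set step : U × U → U × U := fun p =>
    if dist (G (mid p.1 p.2)) (mid p.1 p.2) < w₁ then (mid p.1 p.2, p.2) else (p.1, mid p.1 p.2)
    with hstep
  set s : ℕ → U × U := fun n => step^[n] (a, b) with hs
  have hinv : ∀ n, dist (G (s n).1) (s n).1 < w₁ ∧ w₂ < dist (G (s n).2) (s n).2 ∧
      dist (s n).1 (s n).2 ≤ dist a b / 2 ^ n := by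
    intro n
    induction n with
    | zero => exact ⟨ha, hb, by simp [hs]⟩
    | succ n ih =>
      have hsucc : s (n+1) = step (s n) := by
        simp [hs, Function.iterate_succ_apply']
      rcases ih with ⟨ih1, ih2, ih3⟩
      have hrw : dist a b / 2 ^ (n+1) = dist a b / 2 ^ n / 2 := by
        rw [pow_succ]; ring
      by_cases hc : dist (G (mid (s n).1 (s n).2)) (mid (s n).1 (s n).2) < w₁
      · have heq : s (n+1) = (mid (s n).1 (s n).2, (s n).2) := by rw [hsucc]; simp [hstep, hc]
        rw [heq]
        refine ⟨hc, ih2, ?_⟩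
        have := hmid2 (s n).1 (s n).2
        rw [this, hrw]
        linarith
      · have heq : s (n+1) = ((s n).1, mid (s n).1 (s n).2) := by rw [hsucc]; simp [hstep, hc]
        rw [heq]
        push_neg at hc
        refine ⟨ih1, hno _ hc, ?_⟩
        have h1 := hmid1 (s n).1 (s n).2
        rw [dist_comm, h1, hrw]
        linarith
  obtain ⟨n, hn⟩ := pow_unbounded_of_one_lt (2 * dist a b / (w₂ - w₁)) (by norm_num : (1:ℝ) < 2)
  obtain ⟨h1, h2, h3⟩ := hinv n
  have hpos : (0:ℝ) < 2 ^ n := by positivity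
  have hsm : dist a b / 2 ^ n < (w₂ - w₁) / 2 := by
    rw [div_lt_div_iff₀ hpos (by norm_num)]
    rw [div_lt_iff₀ (by linarith)] at hn
    nlinarith
  have := hlip (s n).2 (s n).1
  rw [dist_comm (s n).2 (s n).1] at this
  linarith
end aux



private def sigmaP (k : ℕ) : Equiv.Perm ℕ := Equiv.swap 0 (2*k+2) * Equiv.swap 1 (2*k+3)

private def tauP (k : ℕ) : Equiv.Perm ℕ := sigmaP k * Equiv.swap 0 1 * (sigmaP k)⁻¹

private lemma tauP_fix (k i : ℕ) (hi : i ≤ 2*k+1) : tauP k i = i := by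
  have ha0 : (2*k+2 : ℕ) ≠ 0 := by omega
  have ha1 : (2*k+2 : ℕ) ≠ 1 := by omega
  have hb0 : (2*k+3 : ℕ) ≠ 0 := by omega
  have hb1 : (2*k+3 : ℕ) ≠ 1 := by omega
  have hab : (2*k+2 : ℕ) ≠ 2*k+3 := by omega
  simp only [tauP, sigmaP, mul_inv_rev, Equiv.swap_inv, Equiv.Perm.mul_apply]
  rcases Nat.lt_or_ge i 2 with h2 | h2
  · interval_cases i
    · rw [Equiv.swap_apply_left, Equiv.swap_apply_of_ne_of_ne ha1 hab,
        Equiv.swap_apply_of_ne_of_ne ha0 ha1, Equiv.swap_apply_of_ne_of_ne ha1 hab,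
        Equiv.swap_apply_right]
    · have h10 : (1:ℕ) ≠ 0 := by omega
      rw [Equiv.swap_apply_of_ne_of_ne h10 ha1.symm, Equiv.swap_apply_left,
        Equiv.swap_apply_of_ne_of_ne hb0 hb1, Equiv.swap_apply_right,
        Equiv.swap_apply_of_ne_of_ne h10 ha1.symm]
  · have hi0 : i ≠ 0 := by omega
    have hi1 : i ≠ 1 := by omega
    have hia : i ≠ 2*k+2 := by omega
    have hib : i ≠ 2*k+3 := by omega
    rw [Equiv.swap_apply_of_ne_of_ne hi0 hia, Equiv.swap_apply_of_ne_of_ne hi1 hib,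
      Equiv.swap_apply_of_ne_of_ne hi0 hi1, Equiv.swap_apply_of_ne_of_ne hi1 hib,
      Equiv.swap_apply_of_ne_of_ne hi0 hia]

private lemma tauP_sq (k : ℕ) : tauP k * tauP k = 1 := by
  have : tauP k * tauP k = sigmaP k * (Equiv.swap 0 1 * Equiv.swap 0 1) * (sigmaP k)⁻¹ := by
    simp only [tauP]; group
  rw [this, Equiv.swap_mul_self, mul_one, mul_inv_cancel]

private lemma tauP_sigma (k : ℕ) : tauP k * sigmaP k = sigmaP k * Equiv.swap 0 1 := by
  simp only [tauP]
  group


/-- Let `U` be a metric space in which every Katětov function defined on a countable subset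
is realized (this is in particular the case for the generalized Urysohn space `𝕌_κ` for an
uncountable cardinal `κ` with `κ^{<κ} = κ`). Then there is no injective continuous group
homomorphism from `S_∞ = Equiv.Perm ℕ` (with the pointwise convergence topology) into the
isometry group `Iso(U)` (with the pointwise convergence topology). -/
theorem no_continuous_embedding_of_Sinfty_into_isometryGroup_of_Urysohn
    {U : Type*} [MetricSpace U]
    (hreal : ∀ S : Set U, S.Countable → ∀ f : S → ℝ, IsKatetov f →
      ∃ z : U, ∀ s : S, dist z (s : U) = f s) :
    ¬ ∃ e : Equiv.Perm ℕ →* (U ≃ᵢ U),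
        Function.Injective e ∧ Continuous e := by
  classical
  rintro ⟨e, hinj, hcont⟩
  -- continuity extraction
  have cont : ∀ (F : Finset U) (ε : ℝ), 0 < ε →
      ∃ N : ℕ, ∀ h : Equiv.Perm ℕ, (∀ i ≤ N, h i = i) → ∀ x ∈ F, dist (e h x) x < ε := by
    intro F ε hε
    have hct : ContinuousAt e 1 := hcont.continuousAt
    have h1 : e 1 = 1 := map_one e
    set W : Set (U ≃ᵢ U) := {φ | ∀ x ∈ F, dist (φ x) x < ε} with hW
    have hWn : W ∈ nhds (1 : U ≃ᵢ U) := by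
      rw [nhds_induced]
      refine Filter.mem_comap.2 ⟨{f : U → U | ∀ x ∈ F, f x ∈ Metric.ball x ε}, ?_, ?_⟩
      · have hpi : ((F : Set U).pi (fun x => Metric.ball x ε)) ∈ nhds (⇑(1 : U ≃ᵢ U)) := by
          apply set_pi_mem_nhds F.finite_toSet
          intro x _
          simpa using Metric.ball_mem_nhds x hε
        refine Filter.mem_of_superset hpi ?_
        intro f hf x hx
        exact hf x hx
      · intro φ hφ x hx
        have := hφ x hx
        simpa [Metric.mem_ball, dist_comm] using this
    have hpre := hct (by rw [h1]; exact hWn)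
    rw [nhds_induced] at hpre
    obtain ⟨V, hV, hVsub⟩ := Filter.mem_comap.1 hpre
    rw [nhds_pi] at hV
    obtain ⟨I, sets, hsets, hIsub⟩ := Filter.mem_pi'.1 hV
    refine ⟨I.sup id, fun h hfix => ?_⟩
    have hmem : (⇑h : ℕ → ℕ) ∈ Set.pi (↑I) sets := by
      intro i hi
      have hfi : h i = i := hfix i (Finset.le_sup (f := id) hi)
      rw [hfi]
      exact mem_of_mem_nhds (hsets i)
    exact hVsub (hIsub hmem)
  -- basic applications
  have happ : ∀ (a b : Equiv.Perm ℕ) (u : U), e (a * b) u = e a (e b u) := by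
    intro a b u; rw [map_mul]; rfl
  have hinvapp : ∀ (γ : Equiv.Perm ℕ) (v : U), e γ (e γ⁻¹ v) = v := by
    intro γ v
    rw [← happ, mul_inv_cancel, map_one]; rfl
  have hed : ∀ (γ : Equiv.Perm ℕ) (u v : U), dist (e γ u) v = dist u (e γ⁻¹ v) := by
    intro γ u v
    conv_lhs => rw [← hinvapp γ v]
    exact (e γ).dist_eq u (e γ⁻¹ v)
  obtain ⟨z₀⟩ : Nonempty U := aux_nonempty hreal
  set τzero : Equiv.Perm ℕ := Equiv.swap 0 1 with hτzero
  have hτne : τzero ≠ 1 := by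
    intro h
    have := Equiv.congr_fun h 0
    simp [hτzero, Equiv.swap_apply_left] at this
  have hene : e τzero ≠ 1 := fun h => hτne (hinj (h.trans (map_one e).symm))
  obtain ⟨x₀, hx₀⟩ : ∃ x : U, e τzero x ≠ x := by
    by_contra hcon
    push_neg at hcon
    exact hene (IsometryEquiv.ext hcon)
  have hδstar : 0 < dist (e τzero x₀) x₀ := dist_pos.2 hx₀
  set δstar := dist (e τzero x₀) x₀ with hδs
  set ε₀ : ℝ := min δstar 1 / 2 with hε₀
  have hε₀pos : 0 < ε₀ := by
    have : 0 < min δstar 1 := lt_min hδstar one_pos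
    positivity
  have hε₀le : ε₀ ≤ 1/2 := by
    have : min δstar 1 ≤ 1 := min_le_right _ _
    rw [hε₀]; linarith
  have hε₀δ : 2 * ε₀ ≤ δstar := by
    have : min δstar 1 ≤ δstar := min_le_left _ _
    rw [hε₀]; linarith
  -- conjugation displacement
  have hdisp : ∀ (k : ℕ) (z : U),
      dist (e (tauP k) z) z = dist (e τzero (e (sigmaP k)⁻¹ z)) (e (sigmaP k)⁻¹ z) := by
    intro k z
    conv_lhs => rw [← hinvapp (sigmaP k) z]
    rw [← happ]
    have h1 : tauP k * sigmaP k = sigmaP k * τzero := tauP_sigma k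
    rw [h1, happ]
    exact (e (sigmaP k)).dist_eq _ _
  by_cases hlow : ∃ a : U, dist (e τzero a) a < ε₀ / 2
  case neg =>
    -- every point is moved by at least ε₀/2 by every conjugate of τzero : contradiction
    push_neg at hlow
    obtain ⟨N, hN⟩ := cont {z₀} (ε₀/2) (by positivity)
    have hfix : ∀ i ≤ N, (tauP N) i = i := fun i hi => tauP_fix N i (by omega)
    have := hN (tauP N) hfix z₀ (by simp)
    rw [hdisp N z₀] at this
    exact absurd this (not_lt.2 (hlow _))
  case pos =>
  obtain ⟨a, ha⟩ := hlow
  obtain ⟨xs, hxs1, hxs2⟩ := aux_window hreal (e τzero) a x₀ (ε₀/2) ε₀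
    (by positivity) (by linarith) ha (by simp only [← hδs]; linarith)
  set δbar : ℝ := dist (e τzero xs) xs with hδbar
  set g : ℝ := ε₀ / 2 with hg
  have hgpos : 0 < g := by rw [hg]; positivity
  have hgδ : g ≤ δbar := by rw [hg, hδbar]; exact hxs1
  have hδ1 : δbar ≤ 1 := by
    rw [hδbar]
    calc dist (e τzero xs) xs ≤ ε₀ := hxs2
    _ ≤ 1 := by linarith
  set x : ℕ → U := fun k => e (sigmaP k) xs with hx
  set y : ℕ → U := fun k => e (tauP k) (x k) with hy
  have hyx : ∀ k, y k = e (sigmaP k) (e τzero xs) := by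
    intro k
    rw [hy, hx]
    simp only []
    rw [← happ, tauP_sigma k, happ]
  have hxy : ∀ k, dist (y k) (x k) = δbar := by
    intro k
    rw [hyx k, hx, hδbar]
    simp only []
    exact (e (sigmaP k)).dist_eq _ _
  -- the countable group part
  set Γ : Set (Equiv.Perm ℕ) :=
    insert 1 (Set.range tauP ∪ Set.image2 (fun a b => tauP a * tauP b) Set.univ Set.univ) with hΓ
  have hΓc : Γ.Countable := by
    refine Set.Countable.insert 1 ?_
    exact (Set.countable_range tauP).union
      (Set.Countable.image2 Set.countable_univ Set.countable_univ _)
  have hΓ1 : (1 : Equiv.Perm ℕ) ∈ Γ := Set.mem_insert _ _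
  have hΓτ : ∀ k, tauP k ∈ Γ := fun k => Set.mem_insert_of_mem _ (Or.inl ⟨k, rfl⟩)
  have hΓττ : ∀ a b, tauP a * tauP b ∈ Γ := fun a b =>
    Set.mem_insert_of_mem _ (Or.inr ⟨a, Set.mem_univ a, b, Set.mem_univ b, rfl⟩)
  set SS : List U → Set U := fun l =>
    (fun p : Equiv.Perm ℕ × U => e p.1 p.2) '' (Γ ×ˢ (Set.range x ∪ {u | u ∈ l})) with hSS
  have hSSc : ∀ l, (SS l).Countable := by
    intro l
    apply Set.Countable.image
    exact hΓc.prod ((Set.countable_range x).union l.finite_toSet.countable)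
  have hmemx : ∀ (l : List U) (γ : Equiv.Perm ℕ), γ ∈ Γ → ∀ n, e γ (x n) ∈ SS l :=
    fun l γ hγ n => ⟨(γ, x n), ⟨hγ, Or.inl ⟨n, rfl⟩⟩, rfl⟩
  have hmemw : ∀ (l : List U) (γ : Equiv.Perm ℕ), γ ∈ Γ → ∀ w ∈ l, e γ w ∈ SS l :=
    fun l γ hγ w hw => ⟨(γ, w), ⟨hγ, Or.inr hw⟩, rfl⟩
  -- the recursive sequence of cone points
  have hpickex : ∀ (l : List U) (k : ℕ), ∃ z : U, ∀ s ∈ SS l, dist z s = dist s (x k) + 2 :=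
    fun l k => aux_cone hreal (SS l) (hSSc l) (x k) 2 (by norm_num)
  choose pick hpick using hpickex
  obtain ⟨Lf, hLf0, hLfs⟩ : ∃ Lf : ℕ → List U, Lf 0 = [] ∧
      ∀ k, Lf (k+1) = Lf k ++ [pick (Lf k) k] :=
    ⟨fun n => Nat.rec [] (fun k ih => ih ++ [pick ih k]) n, rfl, fun k => rfl⟩
  set Z : ℕ → U := fun k => pick (Lf k) k with hZdef
  have hZs : ∀ (k : ℕ) (s : U), s ∈ SS (Lf k) → dist (Z k) s = dist s (x k) + 2 :=
    fun k => hpick (Lf k) k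
  have hmemL : ∀ j k, j < k → Z j ∈ Lf k := by
    intro j k
    induction k with
    | zero => omega
    | succ k ih =>
      intro hjk
      rw [hLfs k]
      rcases Nat.lt_or_ge j k with h | h
      · exact List.mem_append_left _ (ih h)
      · have : j = k := by omega
        subst this
        exact List.mem_append_right _ (by simp [hZdef])
  set Yp : ℕ → U := fun k => e (tauP k) (Z k) with hYp
  have happ1 : ∀ u : U, e 1 u = u := fun u => by rw [map_one]; rfl
  have hy' : ∀ k, y k = e (tauP k) (x k) := fun k => rfl
  have htauinv : ∀ k, (tauP k)⁻¹ = tauP k := fun k => inv_eq_of_mul_eq_one_right (tauP_sq k)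
  have hedt : ∀ (k : ℕ) (u v : U), dist (e (tauP k) u) v = dist u (e (tauP k) v) := by
    intro k u v
    rw [hed (tauP k) u v, htauinv k]
  have dZZ : ∀ j k, j < k → dist (Z k) (Z j) = dist (x k) (x j) + 4 := by
    intro j k hjk
    have h1 : Z j ∈ SS (Lf k) := by
      have := hmemw (Lf k) 1 hΓ1 (Z j) (hmemL j k hjk)
      rwa [happ1] at this
    rw [hZs k (Z j) h1]
    have h2 : x k ∈ SS (Lf j) := by
      have := hmemx (Lf j) 1 hΓ1 k
      rwa [happ1] at this
    rw [hZs j (x k) h2]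
    ring
  have dZY : ∀ j k, j < k → dist (Z k) (Yp j) = dist (x k) (y j) + 4 := by
    intro j k hjk
    have h1 : Yp j ∈ SS (Lf k) := hmemw (Lf k) (tauP j) (hΓτ j) (Z j) (hmemL j k hjk)
    rw [hZs k (Yp j) h1, hYp]
    simp only []
    rw [hedt j (Z j) (x k)]
    rw [hZs j (e (tauP j) (x k)) (hmemx (Lf j) (tauP j) (hΓτ j) k)]
    rw [hedt j (x k) (x j), ← hy' j]
    ring
  have dYZ : ∀ j k, j < k → dist (Yp k) (Z j) = dist (y k) (x j) + 4 := by
    intro j k hjk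
    rw [hYp]
    simp only []
    rw [hedt k (Z k) (Z j)]
    have h1 : e (tauP k) (Z j) ∈ SS (Lf k) := hmemw (Lf k) (tauP k) (hΓτ k) (Z j) (hmemL j k hjk)
    rw [hZs k _ h1]
    rw [hedt k (Z j) (x k), ← hy' k]
    have h2 : y k ∈ SS (Lf j) := by
      rw [hy' k]; exact hmemx (Lf j) (tauP k) (hΓτ k) k
    rw [hZs j (y k) h2]
    ring
  have dYY : ∀ j k, j < k → dist (Yp k) (Yp j) = dist (y k) (y j) + 4 := by
    intro j k hjk
    rw [hYp]
    simp only []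
    rw [hedt k (Z k) (Yp j)]
    have hconv : e (tauP k) (Yp j) = e (tauP k * tauP j) (Z j) := by
      rw [happ]
    rw [hconv]
    have h1 : e (tauP k * tauP j) (Z j) ∈ SS (Lf k) :=
      hmemw (Lf k) _ (hΓττ k j) (Z j) (hmemL j k hjk)
    rw [hZs k _ h1]
    rw [hed (tauP k * tauP j) (Z j) (x k)]
    have hinv2 : (tauP k * tauP j)⁻¹ = tauP j * tauP k := by
      rw [mul_inv_rev, htauinv, htauinv]
    rw [hinv2]
    have h2 : e (tauP j * tauP k) (x k) ∈ SS (Lf j) := hmemx (Lf j) _ (hΓττ j k) k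
    rw [hZs j _ h2]
    have hconv2 : e (tauP j * tauP k) (x k) = e (tauP j) (y k) := by
      rw [happ]
    rw [hconv2, hedt j (y k) (x j), ← hy' j]
    ring
  have dZYk : ∀ k, δbar ≤ dist (Z k) (Yp k) ∧ dist (Z k) (Yp k) ≤ 4 + δbar := by
    intro k
    have ha1 : dist (Z k) (y k) = δbar + 2 := by
      have h1 : y k ∈ SS (Lf k) := by rw [hy' k]; exact hmemx (Lf k) (tauP k) (hΓτ k) k
      rw [hZs k (y k) h1, hxy k]
    have hb1 : dist (Yp k) (y k) = 2 := by
      have : dist (Yp k) (y k) = dist (Z k) (x k) := by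
        rw [hYp, hy' k]
        exact (e (tauP k)).dist_eq _ _
      rw [this]
      have h1 : x k ∈ SS (Lf k) := by
        have := hmemx (Lf k) 1 hΓ1 k
        rwa [happ1] at this
      rw [hZs k (x k) h1]
      simp
    constructor
    · have h := dist_triangle (Z k) (Yp k) (y k)
      rw [hb1, ha1] at h
      linarith
    · have h := dist_triangle (Z k) (y k) (Yp k)
      rw [ha1, dist_comm (y k) (Yp k), hb1] at h
      linarith
  have hδ0 : 0 ≤ δbar := le_trans (le_of_lt hgpos) hgδ
  have hg1 : g ≤ 1 := by rw [hg]; linarith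
  set lam : ℕ → ℝ := fun k => dist (x k) (x 0) with hlam
  have hlam0 : ∀ k, 0 ≤ lam k := fun k => dist_nonneg
  set Gv : ℕ × Bool → ℝ := fun p => 4 + lam p.1 - (if p.2 then 0 else g) with hGv
  set tfun : ℕ × Bool → U := fun p => if p.2 then Z p.1 else Yp p.1 with htfun
  have hGvpos : ∀ p, 0 < Gv p := by
    intro p
    rw [hGv]
    simp only []
    have := hlam0 p.1
    rcases p.2 <;> simp <;> linarith
  -- uniform description of cross distances
  have hwext : ∀ j k, j < k → ∀ (bp bq : Bool), ∃ w : ℝ,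
      dist (tfun (k,bp)) (tfun (j,bq)) = w + 4 ∧
      (dist (x k) (x j) - 2*δbar ≤ w ∧ w ≤ dist (x k) (x j) + 2*δbar) ∧ 0 ≤ w := by
    intro j k hjk bp bq
    have t1 : dist (x k) (y j) ≤ dist (x k) (x j) + δbar := by
      have := dist_triangle (x k) (x j) (y j)
      rw [dist_comm (x j) (y j), hxy j] at this
      linarith
    have t2 : dist (x k) (x j) ≤ dist (x k) (y j) + δbar := by
      have := dist_triangle (x k) (y j) (x j)
      rw [hxy j] at this
      linarith
    have t3 : dist (y k) (x j) ≤ dist (x k) (x j) + δbar := by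
      have := dist_triangle (y k) (x k) (x j)
      rw [hxy k] at this
      linarith
    have t4 : dist (x k) (x j) ≤ dist (y k) (x j) + δbar := by
      have := dist_triangle (x k) (y k) (x j)
      rw [dist_comm (x k) (y k), hxy k] at this
      linarith
    have t5 : dist (y k) (y j) ≤ dist (x k) (x j) + 2*δbar := by
      have h1 := dist_triangle (y k) (x k) (y j)
      have h2 := dist_triangle (x k) (x j) (y j)
      rw [hxy k] at h1
      rw [dist_comm (x j) (y j), hxy j] at h2
      linarith
    have t6 : dist (x k) (x j) ≤ dist (y k) (y j) + 2*δbar := by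
      have h1 := dist_triangle (x k) (y k) (x j)
      have h2 := dist_triangle (y k) (y j) (x j)
      rw [dist_comm (x k) (y k), hxy k] at h1
      rw [hxy j] at h2
      linarith
    rcases bp <;> rcases bq
    · exact ⟨dist (y k) (y j), by simp [htfun, dYY j k hjk], ⟨by linarith, by linarith⟩,
        dist_nonneg⟩
    · exact ⟨dist (y k) (x j), by simp [htfun, dYZ j k hjk], ⟨by linarith, by linarith⟩,
        dist_nonneg⟩
    · exact ⟨dist (x k) (y j), by simp [htfun, dZY j k hjk], ⟨by linarith, by linarith⟩,
        dist_nonneg⟩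
    · exact ⟨dist (x k) (x j), by simp [htfun, dZZ j k hjk],
        ⟨by linarith [hδ0], by linarith [hδ0]⟩, dist_nonneg⟩
  have hcross : ∀ j k, j < k → ∀ (bp bq : Bool),
      |Gv (k,bp) - Gv (j,bq)| ≤ dist (tfun (k,bp)) (tfun (j,bq)) ∧
      dist (tfun (k,bp)) (tfun (j,bq)) ≤ Gv (k,bp) + Gv (j,bq) := by
    intro j k hjk bp bq
    obtain ⟨w, hDw, ⟨hw1, hw2⟩, hw0⟩ := hwext j k hjk bp bq
    have hxx := abs_dist_sub_le (x k) (x j) (x 0)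
    rw [abs_le] at hxx
    have hsumx : dist (x k) (x j) ≤ lam k + lam j := by
      have := dist_triangle (x k) (x 0) (x j)
      rw [dist_comm (x 0) (x j)] at this
      exact this
    have hb1 : 0 ≤ (if bp then (0:ℝ) else g) ∧ (if bp then (0:ℝ) else g) ≤ g := by
      rcases bp <;> simp <;> linarith
    have hb2 : 0 ≤ (if bq then (0:ℝ) else g) ∧ (if bq then (0:ℝ) else g) ≤ g := by
      rcases bq <;> simp <;> linarith
    have hGvk : Gv (k,bp) = 4 + lam k - (if bp then 0 else g) := rfl
    have hGvj : Gv (j,bq) = 4 + lam j - (if bq then 0 else g) := rfl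
    constructor
    · rw [hDw, hGvk, hGvj, abs_le]
      constructor
      · linarith [hb1.1, hb1.2, hb2.1, hb2.2, hxx.1, hxx.2, hδ1, hg1]
      · linarith [hb1.1, hb1.2, hb2.1, hb2.2, hxx.1, hxx.2, hδ1, hg1]
    · rw [hDw, hGvk, hGvj]
      linarith [hb1.1, hb1.2, hb2.1, hb2.2, hδ1, hg1]
  have hsame : ∀ (k : ℕ) (bp bq : Bool),
      |Gv (k,bp) - Gv (k,bq)| ≤ dist (tfun (k,bp)) (tfun (k,bq)) ∧
      dist (tfun (k,bp)) (tfun (k,bq)) ≤ Gv (k,bp) + Gv (k,bq) := by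
    intro k bp bq
    obtain ⟨hlo, hhi⟩ := dZYk k
    have hGvk : ∀ b : Bool, Gv (k,b) = 4 + lam k - (if b then 0 else g) := fun _ => rfl
    have hl0 := hlam0 k
    rcases bp <;> rcases bq
    · constructor
      · simp [hGvk]
      · simp only [hGvk]
        have : dist (tfun (k,false)) (tfun (k,false)) = 0 := by simp
        rw [this]; simp; linarith
    · have hdd : dist (tfun (k,false)) (tfun (k,true)) = dist (Z k) (Yp k) := by
        simp [htfun, dist_comm]
      rw [hdd]
      constructor
      · rw [hGvk, hGvk]
        rw [abs_le]
        constructor <;> simp <;> linarith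
      · rw [hGvk, hGvk]
        simp
        linarith
    · have hdd : dist (tfun (k,true)) (tfun (k,false)) = dist (Z k) (Yp k) := by
        simp [htfun]
      rw [hdd]
      constructor
      · rw [hGvk, hGvk]
        rw [abs_le]
        constructor <;> simp <;> linarith
      · rw [hGvk, hGvk]
        simp
        linarith
    · constructor
      · simp [hGvk]
      · have : dist (tfun (k,true)) (tfun (k,true)) = 0 := by simp
        rw [this, hGvk]; simp; linarith
  have keynum : ∀ p q : ℕ × Bool,
      |Gv p - Gv q| ≤ dist (tfun p) (tfun q) ∧ dist (tfun p) (tfun q) ≤ Gv p + Gv q := by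
    rintro ⟨k, bp⟩ ⟨j, bq⟩
    rcases lt_trichotomy k j with h | h | h
    · obtain ⟨h1, h2⟩ := hcross k j h bq bp
      refine ⟨?_, ?_⟩
      · rw [abs_sub_comm, dist_comm]; exact h1
      · rw [dist_comm]; linarith
    · subst h; exact hsame k bp bq
    · exact hcross j k h bp bq
  -- positivity of distances between distinct indices
  have hdpos : ∀ p q : ℕ × Bool, p ≠ q → 0 < dist (tfun p) (tfun q) := by
    rintro ⟨k, bp⟩ ⟨j, bq⟩ hne
    rcases lt_trichotomy k j with h | h | h
    · obtain ⟨w, hDw, -, hw0⟩ := hwext k j h bq bp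
      rw [dist_comm, hDw]
      linarith
    · subst h
      have hbne : bp ≠ bq := by
        intro hb; exact hne (by rw [hb])
      obtain ⟨hlo, -⟩ := dZYk k
      rcases bp <;> rcases bq <;> try (exact absurd rfl hbne)
      · have hdd : dist (tfun (k,false)) (tfun (k,true)) = dist (Z k) (Yp k) := by
          simp [htfun, dist_comm]
        rw [hdd]; linarith
      · have hdd : dist (tfun (k,true)) (tfun (k,false)) = dist (Z k) (Yp k) := by
          simp [htfun]
        rw [hdd]; linarith
    · obtain ⟨w, hDw, -, hw0⟩ := hwext j k h bp bq
      rw [hDw]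
      linarith
  have hinjT : Function.Injective tfun := by
    intro p q hpq
    by_contra hne
    have := hdpos p q hne
    rw [hpq, dist_self] at this
    exact lt_irrefl 0 this
  set T : Set U := Set.range tfun with hT
  have hTc : T.Countable := Set.countable_range _
  set fT : T → ℝ := fun u => Gv (Function.invFun tfun (u : U)) with hfTdef
  have hfT : ∀ p : ℕ × Bool, fT ⟨tfun p, ⟨p, rfl⟩⟩ = Gv p := by
    intro p
    rw [hfTdef]
    simp only []
    rw [Function.leftInverse_invFun hinjT p]
  have hKat : IsKatetov fT := by
    constructor
    · intro u
      exact le_of_lt (hGvpos _)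
    · rintro ⟨u, hu⟩ ⟨v, hv⟩
      obtain ⟨p, hp⟩ := hu
      obtain ⟨q, hq⟩ := hv
      have h1 : fT ⟨u, ⟨p, hp⟩⟩ = Gv p := by
        subst hp
        exact hfT p
      have h2 : fT ⟨v, ⟨q, hq⟩⟩ = Gv q := by
        subst hq
        exact hfT q
      rw [h1, h2]
      subst hp
      subst hq
      exact keynum p q
  obtain ⟨zstar, hzspec⟩ := hreal T hTc fT hKat
  have hzs : ∀ p : ℕ × Bool, dist zstar (tfun p) = Gv p := by
    intro p
    have := hzspec ⟨tfun p, ⟨p, rfl⟩⟩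
    rwa [hfT p] at this
  obtain ⟨N, hN⟩ := cont {zstar} (g/2) (by positivity)
  have hfix : ∀ i ≤ N, (tauP N) i = i := fun i hi => tauP_fix N i (by omega)
  have hsmall := hN (tauP N) hfix zstar (by simp)
  have hkey : dist (e (tauP N) zstar) (Yp N) = dist zstar (Z N) := by
    rw [hedt N zstar (Yp N)]
    congr 1
    rw [hYp]
    simp only []
    rw [← happ, tauP_sq, happ1]
  have hv1 : dist zstar (Z N) = 4 + lam N := by
    have h := hzs (N, true)
    have ht : tfun (N, true) = Z N := by simp [htfun]
    have hgv : Gv (N, true) = 4 + lam N := by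
      have : Gv (N, true) = 4 + lam N - (if true then 0 else g) := rfl
      rw [this]; simp
    rw [ht, hgv] at h
    exact h
  have hv2 : dist zstar (Yp N) = 4 + lam N - g := by
    have h := hzs (N, false)
    have ht : tfun (N, false) = Yp N := by simp [htfun]
    have hgv : Gv (N, false) = 4 + lam N - g := by
      have : Gv (N, false) = 4 + lam N - (if false then 0 else g) := rfl
      rw [this]; simp
    rw [ht, hgv] at h
    exact h
  have htri : dist zstar (Z N) ≤ dist (e (tauP N) zstar) zstar + dist zstar (Yp N) := by
    calc dist zstar (Z N) = dist (e (tauP N) zstar) (Yp N) := hkey.symm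
    _ ≤ dist (e (tauP N) zstar) zstar + dist zstar (Yp N) := dist_triangle _ _ _
  rw [hv1, hv2] at htri
  linarith
end

section
/- Let (X,d) be a metric space, let ε > 0 and D > 0, and let (x_n) and (y_n) be sequences in X such that ε ≤ d(x_n, y_n) ≤ 2ε for every n and all distances among the points {x_n : n ∈ ℕ} ∪ {y_n : n ∈ ℕ} are at most D. Then there exist an infinite set S ⊆ ℕ and a Katětov function F defined on the set {x_n : n ∈ S} ∪ {y_n : n ∈ S} such that |F(x_n) − F(y_n)| ≥ ε/4 for every n ∈ S. -/
/-- A Katětov function on a subset `T` of a metric space `X`: a function which is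
nonnegative on `T` and satisfies `|F p − F q| ≤ d(p, q) ≤ F p + F q` for all `p, q ∈ T`. -/
def IsKatetovOn {X : Type*} [MetricSpace X] (T : Set X) (F : X → ℝ) : Prop :=
  (∀ p ∈ T, 0 ≤ F p) ∧
    ∀ p ∈ T, ∀ q ∈ T, |F p - F q| ≤ dist p q ∧ dist p q ≤ F p + F q

/-!
By Ramsey's theorem for pairs, applied twice, we pass to an infinite `S` on which every `y n` is
`ε/4`-far from every `x m`: an infinite homogeneous set of pairs `n < m` with `d(y n, x m) < ε/4`
is impossible, since for `a < b < c` in it the path `x b, y a, x c, y b` would have length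
`< 3ε/4 < d(x b, y b)`. Then `F = D/2 + min (d(·, {x m : m ∈ S})) (ε/4)` is `1`-Lipschitz and at
least `D/2`, hence Katětov on a set of diameter at most `D`, and `F (y n) - F (x n) = ε/4`.
-/

open Filter Metric

theorem Ultrafilter.exists_infinite_subset_forall_lt_imp {U : Ultrafilter ℕ}
    (hU : (U : Filter ℕ) ≤ cofinite) {r : ℕ → ℕ → Prop} {B : Set ℕ} (hB : B ∈ U)
    (hr : ∀ n ∈ B, {m | r n m} ∈ U) :
    ∃ S ⊆ B, S.Infinite ∧ ∀ n ∈ S, ∀ m ∈ S, n < m → r n m := by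
  obtain ⟨f, hfB, hf⟩ := exists_seq_of_forall_finset_exists (· ∈ B) (fun n m => n < m ∧ r n m)
    fun s hs => by
      have hmem : B ∩ ⋂ n ∈ s, ({m | r n m} ∩ Set.Ioi n) ∈ U :=
        inter_mem hB <| (biInter_finset_mem s).2 fun n hn =>
          inter_mem (hr n (hs n hn)) (hU <| by simp)
      obtain ⟨m, hmB, hm⟩ := U.nonempty_of_mem hmem
      simp only [Set.mem_iInter, Set.mem_inter_iff, Set.mem_ofPred_eq, Set.mem_Ioi] at hm
      exact ⟨m, hmB, fun n hn => ⟨(hm n hn).2, (hm n hn).1⟩⟩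
  have hmono : StrictMono f := strictMono_nat_of_lt_succ fun n => (hf n (n + 1) n.lt_succ_self).1
  refine ⟨Set.range f, Set.range_subset_iff.2 hfB,
    Set.infinite_range_of_injective hmono.injective, ?_⟩
  rintro _ ⟨i, rfl⟩ _ ⟨j, rfl⟩ hij
  exact (hf i j (hmono.lt_iff_lt.1 hij)).2

theorem Set.Infinite.exists_infinite_subset_homogeneous {A : Set ℕ} (hA : A.Infinite)
    (r : ℕ → ℕ → Prop) :
    ∃ S ⊆ A, S.Infinite ∧
      ((∀ n ∈ S, ∀ m ∈ S, n < m → r n m) ∨ ∀ n ∈ S, ∀ m ∈ S, n < m → ¬r n m) := by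
  have := hA.cofinite_inf_principal_neBot
  set U := Ultrafilter.of (cofinite ⊓ 𝓟 A)
  have hU : (U : Filter ℕ) ≤ cofinite ⊓ 𝓟 A := Ultrafilter.of_le _
  have hAU : A ∈ U := le_principal_iff.1 (hU.trans inf_le_right)
  -- `U` decides for each `n` whether `r n m` holds for `U`-almost all `m`; one of the two answers
  -- is given on a `U`-large set of `n`, on which the greedy choice of a chain succeeds.
  by_cases h : {n ∈ A | {m | r n m} ∈ U} ∈ U
  · obtain ⟨S, hSB, hS, hr⟩ :=
      U.exists_infinite_subset_forall_lt_imp (hU.trans inf_le_left) h fun n hn => hn.2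
    exact ⟨S, hSB.trans (Set.sep_subset _ _), hS, Or.inl hr⟩
  · have hnot : {n ∈ A | {m | ¬r n m} ∈ U} ∈ U := by
      filter_upwards [hAU, U.compl_mem_iff_notMem.2 h] with n hnA hn
      exact ⟨hnA, U.compl_mem_iff_notMem.2 fun h' => hn ⟨hnA, h'⟩⟩
    obtain ⟨S, hSB, hS, hr⟩ :=
      U.exists_infinite_subset_forall_lt_imp (hU.trans inf_le_left) hnot fun n hn => hn.2
    exact ⟨S, hSB.trans (Set.sep_subset _ _), hS, Or.inr hr⟩

section Katetov

variable {X : Type*} [MetricSpace X]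

theorem exists_infinite_subset_forall_lt_le_dist {ε : ℝ} {x y : ℕ → X}
    (hxy : ∀ n, ε ≤ dist (x n) (y n)) {A : Set ℕ} (hA : A.Infinite) :
    ∃ S ⊆ A, S.Infinite ∧ ∀ n ∈ S, ∀ m ∈ S, n < m → ε / 4 ≤ dist (y n) (x m) := by
  obtain ⟨S, hSA, hS, hclose | hfar⟩ :=
    hA.exists_infinite_subset_homogeneous fun n m => dist (y n) (x m) < ε / 4
  · obtain ⟨a, ha⟩ := hS.nonempty
    obtain ⟨b, hb, hab⟩ := hS.exists_gt a
    obtain ⟨c, hc, hbc⟩ := hS.exists_gt b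
    have hpath : dist (x b) (y b) ≤ dist (y a) (x b) + dist (y a) (x c) + dist (y b) (x c) := by
      calc dist (x b) (y b) ≤ dist (x b) (y a) + dist (y a) (x c) + dist (x c) (y b) :=
            dist_triangle4 _ _ _ _
        _ = _ := by rw [dist_comm (x b), dist_comm (x c)]
    linarith [hxy b, hclose a ha b hb hab, hclose a ha c hc (hab.trans hbc), hclose b hb c hc hbc,
      dist_nonneg (x := y a) (y := x b)]
  · exact ⟨S, hSA, hS, fun n hn m hm hnm => not_lt.1 (hfar n hn m hm hnm)⟩

theorem exists_infinite_subset_forall_le_dist {ε : ℝ} {x y : ℕ → X}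
    (hxy : ∀ n, ε ≤ dist (x n) (y n)) :
    ∃ S : Set ℕ, S.Infinite ∧ ∀ n ∈ S, ∀ m ∈ S, ε / 4 ≤ dist (y n) (x m) := by
  obtain ⟨S₁, -, hS₁, hyx⟩ := exists_infinite_subset_forall_lt_le_dist hxy Set.infinite_univ
  obtain ⟨S, hSS₁, hS, hxy'⟩ := exists_infinite_subset_forall_lt_le_dist (x := y) (y := x)
    (fun n => dist_comm (x n) (y n) ▸ hxy n) hS₁
  refine ⟨S, hS, fun n hn m hm => ?_⟩
  rcases lt_trichotomy n m with h | rfl | h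
  · exact hyx n (hSS₁ hn) m (hSS₁ hm) h
  · rw [dist_comm]; linarith [hxy n, dist_nonneg (x := x n) (y := y n)]
  · rw [dist_comm]; exact hxy' m hm n hn h

theorem isKatetovOn_const_add {T : Set X} {D : ℝ} (hD : 0 ≤ D)
    (hT : ∀ p ∈ T, ∀ q ∈ T, dist p q ≤ D) {g : X → ℝ} (hg : LipschitzWith 1 g)
    (hg₀ : ∀ p, 0 ≤ g p) : IsKatetovOn T fun p => D / 2 + g p := by
  refine ⟨fun p _ => by linarith [hg₀ p], fun p hp q hq => ⟨?_, ?_⟩⟩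
  · simpa [Real.dist_eq] using hg.dist_le_mul p q
  · linarith [hT p hp q hq, hg₀ p, hg₀ q]

end Katetov

/-- Let `(X, d)` be a metric space, `ε > 0`, `D > 0`, and let `(x_n)`, `(y_n)` be sequences
in `X` with `ε ≤ d(x_n, y_n) ≤ 2ε` for all `n` and all distances among the points of
`{x_n} ∪ {y_n}` at most `D`. Then there are an infinite set `S ⊆ ℕ` and a Katětov function
`F` on `{x_n : n ∈ S} ∪ {y_n : n ∈ S}` with `|F(x_n) − F(y_n)| ≥ ε/4` for every `n ∈ S`. -/
theorem exists_infinite_subset_and_katetov_separating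
    {X : Type*} [MetricSpace X] (ε D : ℝ) (hε : 0 < ε) (hD : 0 < D)
    (x y : ℕ → X)
    (hdist : ∀ n, ε ≤ dist (x n) (y n) ∧ dist (x n) (y n) ≤ 2 * ε)
    (hbdd : ∀ p ∈ Set.range x ∪ Set.range y, ∀ q ∈ Set.range x ∪ Set.range y,
      dist p q ≤ D) :
    ∃ S : Set ℕ, S.Infinite ∧ ∃ F : X → ℝ,
      IsKatetovOn (x '' S ∪ y '' S) F ∧
      ∀ n ∈ S, ε / 4 ≤ |F (x n) - F (y n)| := by
  obtain ⟨S, hS, hfar⟩ := exists_infinite_subset_forall_le_dist fun n => (hdist n).1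
  have hsub : x '' S ∪ y '' S ⊆ Set.range x ∪ Set.range y :=
    Set.union_subset_union (Set.image_subset_range _ _) (Set.image_subset_range _ _)
  refine ⟨S, hS, fun p => D / 2 + min (infDist p (x '' S)) (ε / 4),
    isKatetovOn_const_add hD.le (fun p hp q hq => hbdd p (hsub hp) q (hsub hq))
      ((lipschitz_infDist_pt _).min_const _) fun p => le_min infDist_nonneg (by positivity),
    fun n hn => ?_⟩
  have hx : infDist (x n) (x '' S) = 0 := infDist_zero_of_mem (Set.mem_image_of_mem x hn)
  have hy : ε / 4 ≤ infDist (y n) (x '' S) :=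
    (le_infDist (hS.nonempty.image x)).2 <| Set.forall_mem_image.2 fun m hm => hfar n hn m hm
  dsimp only
  rw [hx, min_eq_left (by positivity), min_eq_right hy, abs_sub_comm]
  simpa using le_abs_self (ε / 4)
end

section
/- For every n ≥ 1 and all rationals q₁, …, q_n, the set of all f ∈ Aut(ℚ,<) such that for every q ∈ ℚ there exists i ≤ n with f(q_i + q) ≠ q_i + q (i.e., f fixes no translate {q₁+q, …, q_n+q} pointwise) is nowhere dense in Aut(ℚ,<) with the topology of pointwise convergence. -/
/-!
The automorphisms fixing some translate `qs + q` pointwise form an open set. It is dense: given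
`f` and a finite set `s ⊆ (-∞, a]`, keep `f` on `(-∞, a]`, continue affinely up to a point `b`
beyond `a` and `f a`, and use the identity on `[b, ∞)`; this automorphism agrees with `f` on `s`
and fixes every translate lying in `[b, ∞)`. The set of the theorem lies in the complement of
this open dense set, hence is nowhere dense.
-/

open Topology Filter

section PointwiseConvergence

variable {V : Type*} {H : Subgroup (Equiv.Perm V)}

theorem Subgroup.hasBasis_nhds_perm (f : H) :
    (𝓝 f).HasBasis (fun s : Set V => s.Finite)
      (fun s => {g : H | ∀ x ∈ s, (g : Equiv.Perm V) x = (f : Equiv.Perm V) x}) := by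
  -- `permPointwiseTopology` is induced from `V → V` with `V` discrete.
  let _ : TopologicalSpace V := ⊥
  have : DiscreteTopology V := ⟨rfl⟩
  have hind : IsInducing (fun g : H => ((g : Equiv.Perm V) : V → V)) :=
    (IsInducing.induced _).comp IsInducing.subtypeVal
  rw [hind.nhds_eq_comap, nhds_pi]
  simp only [nhds_discrete]
  exact ((hasBasis_pi fun x => hasBasis_pure _).comap _).to_hasBasis
    (fun i hi => ⟨i.1, hi.1, fun g hg x hx => hg x hx⟩)
    (fun s hs => ⟨(s, fun _ => ()), ⟨hs, fun _ _ => trivial⟩, fun g hg x hx => hg x hx⟩)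

theorem Subgroup.isOpen_setOf_perm_apply_eq (x y : V) :
    IsOpen {g : H | (g : Equiv.Perm V) x = y} := by
  refine isOpen_iff_mem_nhds.2 fun f hf => (Subgroup.hasBasis_nhds_perm f).mem_iff.2
    ⟨{x}, Set.finite_singleton x, fun g hg => ?_⟩
  rw [Set.mem_ofPred_eq, hg x rfl, hf]

theorem Subgroup.dense_of_forall_exists_eqOn_perm {D : Set H}
    (hD : ∀ f : H, ∀ s : Set V, s.Finite →
      ∃ g ∈ D, ∀ x ∈ s, (g : Equiv.Perm V) x = (f : Equiv.Perm V) x) :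
    Dense D := fun f =>
  (mem_closure_iff_nhds_basis (Subgroup.hasBasis_nhds_perm f)).2 fun s hs => hD f s hs

end PointwiseConvergence

section Gluing

variable {α : Type*} [LinearOrder α]

theorem exists_orderIso_eqOn_Iic_eqOn_Ici (e₁ e₂ : α ≃o α) {c : α} (hc : e₁ c = e₂ c) :
    ∃ g : α ≃o α, (∀ t ≤ c, g t = e₁ t) ∧ ∀ t, c ≤ t → g t = e₂ t := by
  let f : α → α := fun t => if t ≤ c then e₁ t else e₂ t
  have hf₁ : ∀ t ≤ c, f t = e₁ t := fun t ht => if_pos ht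
  have hf₂ : ∀ t, c ≤ t → f t = e₂ t := fun t ht => by
    rcases ht.eq_or_lt with rfl | ht
    · exact (if_pos le_rfl).trans hc
    · exact if_neg ht.not_ge
  have hmono : StrictMono f := StrictMonoOn.Iic_union_Ici
    (fun x hx y hy hxy => by rw [hf₁ x hx, hf₁ y hy]; exact e₁.strictMono hxy)
    (fun x hx y hy hxy => by rw [hf₂ x hx, hf₂ y hy]; exact e₂.strictMono hxy)
  have hsurj : Function.Surjective f := fun y => by
    rcases le_total y (e₁ c) with hy | hy
    · exact ⟨e₁.symm y, hf₁ _ (e₁.symm_apply_le.2 hy) |>.trans (e₁.apply_symm_apply y)⟩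
    · exact ⟨e₂.symm y,
        hf₂ _ (e₂.le_symm_apply.2 (hc ▸ hy)) |>.trans (e₂.apply_symm_apply y)⟩
  exact ⟨hmono.orderIsoOfSurjective f hsurj, hf₁, hf₂⟩

end Gluing

section OrderedField

variable {K : Type*} [Field K] [LinearOrder K] [IsStrictOrderedRing K]

theorem exists_orderIso_apply_eq_apply_eq {a b a' b' : K} (hab : a < b) (hab' : a' < b') :
    ∃ e : K ≃o K, e a = a' ∧ e b = b' := by
  have hslope : 0 < (b' - a') / (b - a) := div_pos (sub_pos.2 hab') (sub_pos.2 hab)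
  refine ⟨(OrderIso.addRight (-a)).trans ((OrderIso.mulLeft₀ _ hslope).trans
    (OrderIso.addRight a')), ?_, ?_⟩
  · simp
  · simp [field]
    ring

theorem exists_orderIso_eqOn_Iic_fixing_Ici (f : K ≃o K) {a b : K} (hab : a < b)
    (hfab : f a < b) :
    ∃ g : K ≃o K, (∀ t ≤ a, g t = f t) ∧ ∀ t, b ≤ t → g t = t := by
  obtain ⟨ψ, hψa, hψb⟩ := exists_orderIso_apply_eq_apply_eq hab hfab
  obtain ⟨φ, hφψ, hφ⟩ := exists_orderIso_eqOn_Iic_eqOn_Ici ψ (OrderIso.refl K) hψb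
  obtain ⟨g, hgf, hgφ⟩ := exists_orderIso_eqOn_Iic_eqOn_Ici f φ (c := a)
    (by rw [hφψ a hab.le, hψa])
  exact ⟨g, hgf, fun t ht => (hgφ t (hab.le.trans ht)).trans (hφ t ht)⟩

end OrderedField

theorem mem_relAut_lt_iff_strictMono {α : Type*} [LinearOrder α] {g : Equiv.Perm α} :
    g ∈ relAut (fun a b : α => a < b) ↔ StrictMono g :=
  ⟨fun h _ _ hxy => (h _ _).2 hxy, fun h _ _ => h.lt_iff_lt⟩

def translateFixers {V ι : Type*} [Add V] (H : Subgroup (Equiv.Perm V)) (qs : ι → V) : Set H :=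
  {f | ∃ q, ∀ i, (f : Equiv.Perm V) (qs i + q) = qs i + q}

theorem isOpen_translateFixers {V ι : Type*} [Add V] [Finite ι] (H : Subgroup (Equiv.Perm V))
    (qs : ι → V) : IsOpen (translateFixers H qs) := by
  simp only [translateFixers, Set.ofPred_exists, Set.ofPred_forall]
  exact isOpen_iUnion fun q => isOpen_iInter_of_finite fun i =>
    Subgroup.isOpen_setOf_perm_apply_eq _ _

theorem dense_translateFixers_relAut_lt {K ι : Type*} [Field K] [LinearOrder K]
    [IsStrictOrderedRing K] [Finite ι] (qs : ι → K) :
    Dense (translateFixers (relAut (fun a b : K => a < b)) qs) := by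
  refine Subgroup.dense_of_forall_exists_eqOn_perm fun f s hs => ?_
  obtain ⟨a, ha⟩ := hs.bddAbove
  obtain ⟨m, hm⟩ := (Set.finite_range qs).bddBelow
  let f' : K ≃o K :=
    (mem_relAut_lt_iff_strictMono.1 f.2).orderIsoOfSurjective _ (Equiv.surjective _)
  set b := max a (f' a) + 1
  obtain ⟨g, hgf, hgb⟩ := exists_orderIso_eqOn_Iic_fixing_Ici f' (a := a) (b := b)
    (by linarith [le_max_left a (f' a)]) (by linarith [le_max_right a (f' a)])
  refine ⟨⟨g.toEquiv, mem_relAut_lt_iff_strictMono.2 g.strictMono⟩,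
    ⟨b - m, fun i => hgb _ ?_⟩, fun x hx => hgf x (ha hx)⟩
  linarith [hm (Set.mem_range_self i)]

theorem nowhereDense_fixing_no_translate_general
    (n : ℕ) (qs : Fin n → ℚ) :
    IsNowhereDense {f : relAut (fun a b : ℚ => a < b) |
      ∀ q : ℚ, ∃ i : Fin n, (f : Equiv.Perm ℚ) (qs i + q) ≠ qs i + q} := by
  have hnd : IsNowhereDense (translateFixers (relAut (fun a b : ℚ => a < b)) qs)ᶜ :=
    (isClosed_isNowhereDense_iff_compl.2 ⟨by simpa using isOpen_translateFixers _ qs,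
      by simpa using dense_translateFixers_relAut_lt qs⟩).2
  refine hnd.mono ?_
  rintro f hf ⟨q, hq⟩
  obtain ⟨i, hi⟩ := hf q
  exact hi (hq i)

/-- For every `n ≥ 1` and rationals `q₁, …, q_n`, the set of order automorphisms
`f ∈ Aut(ℚ, <)` fixing no translate `{q₁ + q, …, q_n + q}` pointwise is nowhere dense
in `Aut(ℚ, <)` with the topology of pointwise convergence. -/
theorem nowhereDense_fixing_no_translate
    (n : ℕ) (hn : 1 ≤ n) (qs : Fin n → ℚ) :
    IsNowhereDense {f : relAut (fun a b : ℚ => a < b) |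
      ∀ q : ℚ, ∃ i : Fin n, (f : Equiv.Perm ℚ) (qs i + q) ≠ qs i + q} :=
  nowhereDense_fixing_no_translate_general n qs
end

section
/- Let A be a group, let C be a subgroup of A, and let (h_n)_{n ∈ ℕ} be a sequence of elements of A with h_n ∉ C for every n. Then there exist a group B, an injective group homomorphism ι : A → B, and an element g ∈ B such that g · ι(c) = ι(c) · g for every c ∈ C, while g · ι(h_n) ≠ ι(h_n) · g for every n. -/
/-- Let `A` be a group, `C ≤ A` a subgroup and `(h_n)` a sequence of elements of `A` lying
outside `C`. Then there are a group `B`, an injective group homomorphism `ι : A → B` and an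
element `g ∈ B` commuting with `ι(c)` for every `c ∈ C` but with no `ι(h_n)`. -/
theorem exists_group_extension_with_commuting_element
    {A : Type u} [Group A] (C : Subgroup A) (h : ℕ → A) (hh : ∀ n, h n ∉ C) :
    ∃ (B : Type u) (_ : Group B) (ι : A →* B), Function.Injective ι ∧
      ∃ g : B, (∀ c ∈ C, g * ι c = ι c * g) ∧ ∀ n, g * ι (h n) ≠ ι (h n) * g := by
  classical
  set φ : C ≃* C := MulEquiv.refl C with hφ
  refine ⟨HNNExtension A C C φ, inferInstance, HNNExtension.of,
    HNNExtension.of_injective φ, HNNExtension.t, ?_, ?_⟩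
  · intro c hc
    have := HNNExtension.equiv_eq_conj (φ := φ) (⟨c, hc⟩ : C)
    simp only [hφ, MulEquiv.refl_apply] at this
    calc HNNExtension.t * HNNExtension.of c
        = (HNNExtension.t * HNNExtension.of c * HNNExtension.t⁻¹) * HNNExtension.t := by
          group
      _ = HNNExtension.of c * HNNExtension.t := by rw [← this]
  · intro n heq
    set hn := h n with hhn
    -- The reduced word `t * hn * t⁻¹ * hn⁻¹`
    have hchain : ([((1 : ℤˣ), hn), ((-1 : ℤˣ), hn⁻¹)] : List (ℤˣ × A)).Chain'
        (fun a b => a.2 ∈ HNNExtension.toSubgroup C C a.1 → a.1 = b.1) := by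
      refine List.isChain_cons_cons.2 ⟨fun hmem => ?_, List.isChain_singleton _⟩
      exact absurd hmem (hh n)
    set w : HNNExtension.NormalWord.ReducedWord A C C :=
      ⟨1, [((1 : ℤˣ), hn), ((-1 : ℤˣ), hn⁻¹)], hchain⟩ with hw
    have hprod : w.prod φ = HNNExtension.t * HNNExtension.of hn * HNNExtension.t⁻¹ *
        HNNExtension.of hn⁻¹ := by
      simp [hw, HNNExtension.NormalWord.ReducedWord.prod, mul_assoc]
    have hmem : w.prod φ ∈ (HNNExtension.of.range :
        Subgroup (HNNExtension A C C φ)) := by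
      rw [hprod]
      have : (HNNExtension.t : HNNExtension A C C φ) * HNNExtension.of hn *
          HNNExtension.t⁻¹ * HNNExtension.of hn⁻¹ = 1 := by
        rw [heq]; simp [mul_assoc, ← map_mul]
      rw [this]
      exact one_mem _
    have := HNNExtension.ReducedWord.toList_eq_nil_of_mem_of_range φ w hmem
    simp [hw] at this
end
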